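/- arXiv:2604.04097 — 8 statements merged into one kernel-verified Lean document; each statement's English description precedes it below -/
import Mathlib

section
/- Let χ be an (r+1)-signotope on [n] and let c be an element of [n]. Then the contraction χ_{↓c}, defined on r-subsets M of [n] \ {c} by χ_{↓c}(M) = χ(M ∪ {c}), is an r-signotope on [n] \ {c} (after identifying [n] \ {c} with an initial segment of natural numbers by the order-preserving bijection). -/
/-- Number of sign changes in a list of signs (`true` = `+`, `false` = `-`). -/
def signChanges (l : List Bool) : Nat :=
  (l.zip l.tail).countP (fun p => p.1 != p.2)

/-- The sequence of signs obtained from the set `A` by applying `χ` to `A` minus each of its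
elements, deleted in increasing order. -/
def delSeq (chi : Finset Nat -> Bool) (A : Finset Nat) : List Bool :=
  (List.range A.card).map (fun i => chi (((A.sort (fun a b => a <= b)).eraseIdx i).toFinset))

/-- `chi` is an `r`-signotope on ground set `S`: it is a sign map on `r`-subsets such that for
every `(r+1)`-subset `A ⊆ S` the sign sequence `delSeq chi A` has at most one sign change. -/
def IsSignotopeOn (r : Nat) (S : Finset Nat) (chi : Finset Nat -> Bool) : Prop :=
  forall A : Finset Nat, A ⊆ S -> A.card = r + 1 -> signChanges (delSeq chi A) <= 1

/-!
For `c ∉ A`, the sign sequence of `A` under the contraction at `c` is the sign sequence of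
`A ∪ {c}` under `χ` with the entry for deleting `c` removed, since
`(A ∪ {c}) \ {a} = (A \ {a}) ∪ {c}` for `a ≠ c`.
Removing entries from a sign sequence cannot create sign changes.
-/

lemma signChanges_cons_cons (a b : Bool) (l : List Bool) :
    signChanges (a :: b :: l) = signChanges (b :: l) + if a = b then 0 else 1 := by
  cases a <;> cases b <;> simp [signChanges]

lemma signChanges_le_cons (a : Bool) (l : List Bool) : signChanges l ≤ signChanges (a :: l) := by
  cases l with
  | nil => simp [signChanges]
  | cons b l => rw [signChanges_cons_cons]; omega

lemma signChanges_cons_le (a b : Bool) (l : List Bool) :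
    signChanges (a :: l) ≤ signChanges (b :: l) + if a = b then 0 else 1 := by
  cases l with
  | nil => simp [signChanges]
  | cons x l =>
    rw [signChanges_cons_cons, signChanges_cons_cons]
    cases a <;> cases b <;> cases x <;> simp <;> omega

lemma signChanges_cons_le_cons_of_sublist {l₁ l₂ : List Bool} (h : l₁.Sublist l₂) (a : Bool) :
    signChanges (a :: l₁) ≤ signChanges (a :: l₂) := by
  induction h generalizing a with
  | slnil => rfl
  | cons b _ ih =>
    rw [signChanges_cons_cons]
    exact (ih a).trans (signChanges_cons_le a b _)
  | cons_cons b _ ih =>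
    rw [signChanges_cons_cons, signChanges_cons_cons]
    exact Nat.add_le_add_right (ih b) _

lemma signChanges_le_of_sublist {l₁ l₂ : List Bool} (h : l₁.Sublist l₂) :
    signChanges l₁ ≤ signChanges l₂ := by
  induction h with
  | slnil => rfl
  | cons b _ ih => exact ih.trans (signChanges_le_cons b _)
  | cons_cons b h _ => exact signChanges_cons_le_cons_of_sublist h b

lemma List.Nodup.toFinset_eraseIdx {α : Type*} [DecidableEq α] {l : List α} (hl : l.Nodup)
    (i : ℕ) (hi : i < l.length) : (l.eraseIdx i).toFinset = l.toFinset.erase l[i] := by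
  ext x
  rw [← hl.erase_getElem, List.mem_toFinset, hl.mem_erase_iff, Finset.mem_erase, List.mem_toFinset]

lemma Finset.sort_erase {α : Type*} [DecidableEq α] (r : α → α → Prop) [DecidableRel r]
    [IsTrans α r] [Std.Antisymm r] [Std.Total r] (s : Finset α) (a : α) :
    (s.erase a).sort r = (s.sort r).erase a := by
  have hnd : ((s.sort r).erase a).Nodup := (s.sort_nodup r).erase a
  have hfin : ((s.sort r).erase a).toFinset = s.erase a := by
    ext x
    rw [List.mem_toFinset, (s.sort_nodup r).mem_erase_iff, Finset.mem_erase, Finset.mem_sort]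
  rw [← hfin, List.toFinset_sort r hnd]
  exact (s.pairwise_sort r).sublist List.erase_sublist

lemma delSeq_eq_map_sort (chi : Finset ℕ → Bool) (A : Finset ℕ) :
    delSeq chi A = (A.sort (fun a b => a ≤ b)).map fun a => chi (A.erase a) := by
  apply List.ext_getElem
  · simp [delSeq]
  · intro i hi _
    simp only [delSeq, List.getElem_map, List.getElem_range]
    rw [(A.sort_nodup _).toFinset_eraseIdx i (by simpa [delSeq] using hi), Finset.sort_toFinset]

lemma delSeq_contraction_sublist (chi : Finset ℕ → Bool) {c : ℕ} {A : Finset ℕ} (hc : c ∉ A) :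
    (delSeq (fun M => chi (insert c M)) A).Sublist (delSeq chi (insert c A)) := by
  have hsort : A.sort (fun a b => a ≤ b) = ((insert c A).sort (fun a b => a ≤ b)).erase c := by
    rw [← Finset.sort_erase, Finset.erase_insert hc]
  have hterm : ∀ a ∈ A.sort (fun a b => a ≤ b),
      chi (insert c (A.erase a)) = chi ((insert c A).erase a) := by
    intro a ha
    rw [Finset.mem_sort] at ha
    rw [Finset.erase_insert_of_ne (ne_of_mem_of_not_mem ha hc).symm]
  rw [delSeq_eq_map_sort, delSeq_eq_map_sort, List.map_congr_left hterm, hsort]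
  exact List.erase_sublist.map _

theorem contraction_of_signotope_general (r n : Nat)
    (chi : Finset Nat -> Bool) (h : IsSignotopeOn (r + 1) (Finset.Icc 1 n) chi)
    (c : Nat) (hc : c ∈ Finset.Icc 1 n) :
    IsSignotopeOn r ((Finset.Icc 1 n).erase c) (fun M => chi (insert c M)) := by
  intro A hA hAcard
  have hcA : c ∉ A := fun hc' => by simpa using hA hc'
  refine (signChanges_le_of_sublist (delSeq_contraction_sublist chi hcA)).trans (h _ ?_ ?_)
  · exact Finset.insert_subset hc (hA.trans (Finset.erase_subset c _))
  · rw [Finset.card_insert_of_notMem hcA, hAcard]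

/-- the contraction of an `(r+1)`-signotope on `[n]` at an element `c`,
`M ↦ χ(M ∪ {c})` for `r`-subsets `M` of `[n] \ {c}`, is an `r`-signotope on `[n] \ {c}`
(which is order-isomorphic to an initial segment of the naturals). -/
theorem contraction_of_signotope (r n : Nat) (hr : 1 <= r) (hrn : r + 1 <= n)
    (chi : Finset Nat -> Bool) (h : IsSignotopeOn (r + 1) (Finset.Icc 1 n) chi)
    (c : Nat) (hc : c ∈ Finset.Icc 1 n) :
    IsSignotopeOn r ((Finset.Icc 1 n).erase c) (fun M => chi (insert c M)) :=
  contraction_of_signotope_general r n chi h c hc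
end

section
/- Let χ be a 3-signotope on [n] with block partition [n] = C₁ ∪ C₂, and let O_χ be the induced orientation of the grid C₁ × C₂. Then any 2×2 subgrid of O_χ (given by c₁ < c₁' in C₁ and c₂ < c₂' in C₂) contains at most one sink, i.e., at most one of the four vertices has both of its edges in the subgrid incoming. -/
/-- `C 0, ..., C (r-1)` is a block partition of `[n] = {1, ..., n}`. -/
def IsBlockPartition (n r : Nat) (C : Fin r -> Finset Nat) : Prop :=
  Finset.univ.biUnion C = Finset.Icc 1 n ∧
    ∀ i j : Fin r, i < j -> ∀ c ∈ C i, ∀ c' ∈ C j, c < c'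

/-- The orientation `O_χ` induced by a block signotope: `blockDir chi C v w` means that both `v`
and `w` are grid vertices (of the grid `C 0 × ⋯ × C (r-1)`), they differ in exactly one
coordinate `i`, and the edge between them is directed from `v` to `w` according to the sign of
`chi` on the `(r+1)`-set consisting of all entries of `v` together with `w i`. -/
def blockDir {r : Nat} (chi : Finset Nat -> Bool) (C : Fin r -> Finset Nat)
    (v w : Fin r -> Nat) : Prop :=
  (∀ j, v j ∈ C j) ∧ (∀ j, w j ∈ C j) ∧
    ∃ i, (∀ j, j ≠ i -> v j = w j) ∧
      ((v i < w i ∧ chi (insert (w i) (Finset.image v Finset.univ)) = true) ∨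
       (w i < v i ∧ chi (insert (w i) (Finset.image v Finset.univ)) = false))

/-- Two tuples are adjacent in the grid iff they differ in exactly one coordinate. -/
def NatAdj {r : Nat} (v w : Fin r -> Nat) : Prop :=
  ∃ i, v i ≠ w i ∧ ∀ j, j ≠ i -> v j = w j

/-- `v` is a sink of the subgrid `S` of `O_χ`: all edges of the subgrid at `v` are incoming. -/
def IsBlockSink {r : Nat} (chi : Finset Nat -> Bool) (C : Fin r -> Finset Nat)
    (S : Fin r -> Finset Nat) (v : Fin r -> Nat) : Prop :=
  (∀ i, v i ∈ S i) ∧ ∀ w, (∀ i, w i ∈ S i) -> NatAdj v w -> blockDir chi C w v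

/-!
A sink at a corner of the subgrid prescribes the sign of `χ` on the two triples spanned by its
edges, `{c₁, c₁', ·}` and `{·, c₂, c₂'}`: the sign is `+` exactly when the sink sits at the larger
end of that edge. These four triples are the 3-subsets of `{c₁ < c₁' < c₂ < c₂'}`. Two sinks at
adjacent corners prescribe opposite signs to the triple of their common edge, and two sinks at
opposite corners make the sign sequence of this 4-set alternate, with three sign changes.
-/

theorem Finset.insert_image_update {ι α : Type*} [Fintype ι] [DecidableEq ι] [DecidableEq α]
    (v : ι → α) (i : ι) (x : α) :
    insert (v i) (univ.image (Function.update v i x)) = insert x (univ.image v) := by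
  ext y
  simp only [mem_insert, mem_image, mem_univ, true_and, Function.update_apply]
  constructor
  · rintro (rfl | ⟨j, hj⟩)
    · exact Or.inr ⟨i, rfl⟩
    · split_ifs at hj with hji
      · exact Or.inl hj.symm
      · exact Or.inr ⟨j, hj⟩
  · rintro (rfl | ⟨j, rfl⟩)
    · exact Or.inr ⟨i, by simp⟩
    · by_cases hji : j = i
      · exact Or.inl (by rw [hji])
      · exact Or.inr ⟨j, by simp [hji]⟩

theorem delSeq_of_lt (chi : Finset ℕ → Bool) {a b c d : ℕ} (hab : a < b) (hbc : b < c)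
    (hcd : c < d) :
    delSeq chi {a, b, c, d} = [chi {b, c, d}, chi {a, c, d}, chi {a, b, d}, chi {a, b, c}] := by
  have hnodup : [a, b, c, d].Nodup := by simp; omega
  have hsort : ({a, b, c, d} : Finset ℕ).sort (· ≤ ·) = [a, b, c, d] := by
    rw [show ({a, b, c, d} : Finset ℕ) = [a, b, c, d].toFinset by simp,
      List.toFinset_sort _ hnodup]
    simp; omega
  have hcard : ({a, b, c, d} : Finset ℕ).card = 4 := by
    rw [← Finset.length_sort (· ≤ ·), hsort]; rfl
  rw [delSeq, hcard, hsort]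
  simp [List.range_succ]

theorem IsSignotopeOn.signChanges_le_one {S : Finset ℕ} {chi : Finset ℕ → Bool}
    (hchi : IsSignotopeOn 3 S chi) {a b c d : ℕ} (hab : a < b) (hbc : b < c) (hcd : c < d)
    (ha : a ∈ S) (hb : b ∈ S) (hc : c ∈ S) (hd : d ∈ S) :
    signChanges [chi {b, c, d}, chi {a, c, d}, chi {a, b, d}, chi {a, b, c}] ≤ 1 := by
  rw [← delSeq_of_lt chi hab hbc hcd]
  refine hchi _ ?_ ?_
  · intro x hx
    simp only [Finset.mem_insert, Finset.mem_singleton] at hx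
    rcases hx with rfl | rfl | rfl | rfl <;> assumption
  · rw [Finset.card_insert_of_notMem, Finset.card_insert_of_notMem, Finset.card_pair] <;>
      simp <;> omega

theorem IsBlockPartition.subset_Icc {n r : ℕ} {C : Fin r → Finset ℕ}
    (hC : IsBlockPartition n r C) (i : Fin r) : C i ⊆ Finset.Icc 1 n :=
  hC.1 ▸ Finset.subset_biUnion_of_mem C (Finset.mem_univ i)

theorem IsBlockSink.chi_insert_eq {r : ℕ} {chi : Finset ℕ → Bool} {C S : Fin r → Finset ℕ}
    {v : Fin r → ℕ} (hv : IsBlockSink chi C S v) {i : Fin r} {x : ℕ} (hx : x ∈ S i)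
    (hne : x ≠ v i) : chi (insert x (Finset.univ.image v)) = decide (x < v i) := by
  set w := Function.update v i x
  have hw : ∀ j, w j ∈ S j := by
    intro j
    by_cases hj : j = i
    · subst hj; simpa [w] using hx
    · simpa [w, hj] using hv.1 j
  have hadj : NatAdj v w := ⟨i, by simpa [w] using hne.symm, fun j hj => by simp [w, hj]⟩
  obtain ⟨-, -, j, hwv, hdir⟩ := hv.2 w hw hadj
  obtain rfl : j = i := by
    by_contra hji
    exact hne (by simpa [w] using hwv i (Ne.symm hji))
  rw [Finset.insert_image_update] at hdir
  simp only [w, Function.update_self] at hdir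
  rcases hdir with ⟨hlt, h⟩ | ⟨hlt, h⟩
  · simp [h, hlt]
  · simp [h, hlt.le]

def subgridCorner (c1 c1' c2 c2' : ℕ) (p q : Bool) : Fin 2 → ℕ :=
  ![cond p c1' c1, cond q c2' c2]

theorem exists_subgridCorner_eq {c1 c1' c2 c2' : ℕ} {v : Fin 2 → ℕ}
    (hv : ∀ i, v i ∈ (![{c1, c1'}, {c2, c2'}] : Fin 2 → Finset ℕ) i) :
    ∃ p q, v = subgridCorner c1 c1' c2 c2' p q := by
  have h0 : v 0 = c1 ∨ v 0 = c1' := by simpa using hv 0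
  have h1 : v 1 = c2 ∨ v 1 = c2' := by simpa using hv 1
  obtain ⟨p, hp⟩ : ∃ p, v 0 = cond p c1' c1 := h0.elim (⟨false, ·⟩) (⟨true, ·⟩)
  obtain ⟨q, hq⟩ : ∃ q, v 1 = cond q c2' c2 := h1.elim (⟨false, ·⟩) (⟨true, ·⟩)
  exact ⟨p, q, funext fun i => by fin_cases i <;> simp [subgridCorner, hp, hq]⟩

section TwoByTwo

variable {chi : Finset ℕ → Bool} {C : Fin 2 → Finset ℕ} {c1 c1' c2 c2' : ℕ} {p q : Bool}

theorem IsBlockSink.chi_row_eq (h1 : c1 < c1')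
    (hv : IsBlockSink chi C ![{c1, c1'}, {c2, c2'}] (subgridCorner c1 c1' c2 c2' p q)) :
    chi {c1, c1', cond q c2' c2} = p := by
  have := hv.chi_insert_eq (i := 0) (x := cond p c1 c1') (by cases p <;> simp)
    (by cases p <;> simp [subgridCorner] <;> omega)
  cases p <;> simp [subgridCorner, Fin.univ_succ, h1, h1.not_gt] at this
  · rwa [Finset.insert_comm] at this
  · exact this

theorem IsBlockSink.chi_col_eq (h2 : c2 < c2')
    (hv : IsBlockSink chi C ![{c1, c1'}, {c2, c2'}] (subgridCorner c1 c1' c2 c2' p q)) :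
    chi {cond p c1' c1, c2, c2'} = q := by
  have := hv.chi_insert_eq (i := 1) (x := cond q c2 c2') (by cases q <;> simp)
    (by cases q <;> simp [subgridCorner] <;> omega)
  cases q <;> simp [subgridCorner, Fin.univ_succ, h2, h2.not_gt] at this
  · rwa [Finset.insert_comm, Finset.pair_comm] at this
  · rwa [Finset.insert_comm] at this

end TwoByTwo

theorem eq_of_signChanges_le_one (row col : Bool → Bool) {p q p' q' : Bool}
    (hsig : signChanges [col true, col false, row true, row false] ≤ 1)
    (hrow : row q = p) (hcol : col p = q) (hrow' : row q' = p') (hcol' : col p' = q') :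
    p = p' ∧ q = q' := by
  cases p <;> cases q <;> cases p' <;> cases q' <;> simp_all [signChanges]

/-- for a 3-signotope with a block partition `[n] = C 0 ∪ C 1`, every
`2 × 2` subgrid of the induced orientation `O_χ` (given by `c₁ < c₁'` in `C 0` and
`c₂ < c₂'` in `C 1`) contains at most one sink. -/
theorem two_by_two_subgrid_at_most_one_sink (n : Nat) (chi : Finset Nat -> Bool)
    (C : Fin 2 -> Finset Nat) (hchi : IsSignotopeOn 3 (Finset.Icc 1 n) chi)
    (hC : IsBlockPartition n 2 C)
    (c1 c1' c2 c2' : Nat) (hc1 : c1 ∈ C 0) (hc1' : c1' ∈ C 0) (h1 : c1 < c1')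
    (hc2 : c2 ∈ C 1) (hc2' : c2' ∈ C 1) (h2 : c2 < c2') :
    ∀ v w : Fin 2 -> Nat,
      IsBlockSink chi C ![{c1, c1'}, {c2, c2'}] v ->
      IsBlockSink chi C ![{c1, c1'}, {c2, c2'}] w -> v = w := by
  intro v w hv hw
  obtain ⟨p, q, rfl⟩ := exists_subgridCorner_eq hv.1
  obtain ⟨p', q', rfl⟩ := exists_subgridCorner_eq hw.1
  have h12 : c1' < c2 := hC.2 0 1 (by decide) c1' hc1' c2 hc2
  have hsig := hchi.signChanges_le_one h1 h12 h2 (hC.subset_Icc 0 hc1) (hC.subset_Icc 0 hc1')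
    (hC.subset_Icc 1 hc2) (hC.subset_Icc 1 hc2')
  obtain ⟨rfl, rfl⟩ := eq_of_signChanges_le_one (fun q => chi {c1, c1', cond q c2' c2})
    (fun p => chi {cond p c1' c1, c2, c2'}) hsig (hv.chi_row_eq h1) (hv.chi_col_eq h2)
    (hw.chi_row_eq h1) (hw.chi_col_eq h2)
  rfl
end

section
/- Let O be an orientation of the grid [n₁] × ... × [n_r] (tuples adjacent iff they differ in exactly one coordinate) such that every subgrid has a unique sink. Then the refined index map rf, sending each vertex x to the tuple (rf₁(x), ..., rf_r(x)) where rf_i(x) is the number of outgoing edges of x in dimension i, is a bijection from [n₁] × ... × [n_r] onto {0,...,n₁-1} × ... × {0,...,n_r-1}. -/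
/-- Two vertices of the grid are adjacent iff they differ in exactly one coordinate. -/
def GridAdj {r : Nat} {n : Fin r -> Nat} (x y : ∀ i, Fin (n i)) : Prop :=
  ∃ i, x i ≠ y i ∧ ∀ j, j ≠ i -> x j = y j

/-- `O` is an orientation of the grid graph: `O x y` means the edge `{x, y}` is directed from
`x` to `y`; only adjacent pairs carry an edge, and each edge gets exactly one direction. -/
def IsGridOrientation {r : Nat} {n : Fin r -> Nat}
    (O : (∀ i, Fin (n i)) -> (∀ i, Fin (n i)) -> Prop) : Prop :=
  (∀ x y, O x y -> GridAdj x y) ∧ ∀ x y, GridAdj x y -> (O x y ↔ ¬ O y x)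

/-- `x` is a sink of the subgrid `S`: it lies in `S` and all subgrid edges at `x` are incoming. -/
def IsSinkIn {r : Nat} {n : Fin r -> Nat} (O : (∀ i, Fin (n i)) -> (∀ i, Fin (n i)) -> Prop)
    (S : ∀ i, Finset (Fin (n i))) (x : ∀ i, Fin (n i)) : Prop :=
  (∀ i, x i ∈ S i) ∧ ∀ y, (∀ i, y i ∈ S i) -> GridAdj x y -> O y x

/-- A unique sink orientation: every subgrid (product of nonempty subsets) has a unique sink. -/
def IsUSO {r : Nat} {n : Fin r -> Nat}
    (O : (∀ i, Fin (n i)) -> (∀ i, Fin (n i)) -> Prop) : Prop :=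
  IsGridOrientation O ∧
    ∀ S : ∀ i, Finset (Fin (n i)), (∀ i, (S i).Nonempty) -> ∃! x, IsSinkIn O S x
/-- The out-degree of `x` in dimension `i`: the number of out-neighbours of `x` differing from
`x` in coordinate `i`. -/
noncomputable def rf {r : Nat} {n : Fin r -> Nat} (O : (∀ i, Fin (n i)) -> (∀ i, Fin (n i)) -> Prop)
    (x : ∀ i, Fin (n i)) (i : Fin r) : Nat :=
  Nat.card {c : Fin (n i) // c ≠ x i ∧ O x (Function.update x i c)}

open Finset
open scoped Classical

variable {r : Nat} {n : Fin r → Nat}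

/-- Out-neighbours in dimension `i` as a finset. -/
noncomputable def usoOuts (O : (∀ i, Fin (n i)) -> (∀ i, Fin (n i)) -> Prop)
    (x : ∀ i, Fin (n i)) (i : Fin r) : Finset (Fin (n i)) :=
  univ.filter (fun c => c ≠ x i ∧ O x (Function.update x i c))

/-- In-neighbours in dimension `i` as a finset. -/
noncomputable def usoIns (O : (∀ i, Fin (n i)) -> (∀ i, Fin (n i)) -> Prop)
    (x : ∀ i, Fin (n i)) (i : Fin r) : Finset (Fin (n i)) :=
  univ.filter (fun c => c ≠ x i ∧ ¬ O x (Function.update x i c))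

lemma uso_rf_eq_card (O : (∀ i, Fin (n i)) -> (∀ i, Fin (n i)) -> Prop)
    (x : ∀ i, Fin (n i)) (i : Fin r) : rf O x i = (usoOuts O x i).card := by
  simp [rf, usoOuts, Nat.card_eq_fintype_card, Fintype.card_subtype]

lemma uso_card_split (O : (∀ i, Fin (n i)) -> (∀ i, Fin (n i)) -> Prop)
    (x : ∀ i, Fin (n i)) (i : Fin r) :
    rf O x i + (usoIns O x i).card = n i - 1 := by
  rw [uso_rf_eq_card]
  have h1 : usoOuts O x i = (univ.erase (x i)).filter
      (fun c => O x (Function.update x i c)) := by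
    ext c; simp [usoOuts, Finset.mem_erase, and_comm]
  have h2 : usoIns O x i = (univ.erase (x i)).filter
      (fun c => ¬ O x (Function.update x i c)) := by
    ext c; simp [usoIns, Finset.mem_erase, and_comm]
  rw [h1, h2, Finset.card_filter_add_card_filter_not,
    Finset.card_erase_of_mem (mem_univ _), Finset.card_univ, Fintype.card_fin]

lemma uso_rf_le (O : (∀ i, Fin (n i)) -> (∀ i, Fin (n i)) -> Prop)
    (x : ∀ i, Fin (n i)) (i : Fin r) : rf O x i ≤ n i - 1 := by
  have := uso_card_split O x i; omega

lemma uso_card_Ins (O : (∀ i, Fin (n i)) -> (∀ i, Fin (n i)) -> Prop)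
    (x : ∀ i, Fin (n i)) (i : Fin r) :
    (usoIns O x i).card = n i - 1 - rf O x i := by
  have := uso_card_split O x i; omega

lemma uso_sink_iff {O : (∀ i, Fin (n i)) -> (∀ i, Fin (n i)) -> Prop}
    (hO : IsGridOrientation O) (S : ∀ i, Finset (Fin (n i))) (x : ∀ i, Fin (n i)) :
    IsSinkIn O S x ↔ (∀ i, x i ∈ S i) ∧
      ∀ i, ∀ c ∈ S i, c ≠ x i → ¬ O x (Function.update x i c) := by
  constructor
  · rintro ⟨hx, hsink⟩
    refine ⟨hx, fun i c hc hne => ?_⟩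
    have hy : ∀ j, (Function.update x i c) j ∈ S j := by
      intro j
      rcases eq_or_ne j i with rfl | hj
      · simpa using hc
      · simpa [Function.update_of_ne hj] using hx j
    have hadj : GridAdj x (Function.update x i c) := by
      refine ⟨i, ?_, fun j hj => ?_⟩
      · simp [Ne.symm hne]
      · simp [Function.update_of_ne hj]
    have hyx := hsink _ hy hadj
    intro hxy
    exact (hO.2 x _ hadj).mp hxy hyx
  · rintro ⟨hx, h⟩
    refine ⟨hx, fun y hy hadj => ?_⟩
    obtain ⟨i, hne, heq⟩ := hadj
    have hyu : y = Function.update x i (y i) := by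
      funext j
      rcases eq_or_ne j i with rfl | hj
      · simp
      · simp [Function.update_of_ne hj, (heq j hj).symm]
    have hnxy : ¬ O x y := by
      rw [hyu]; exact h i (y i) (hy i) (Ne.symm hne)
    by_contra hyx
    exact hnxy ((hO.2 x y ⟨i, hne, heq⟩).mpr (fun h' => hyx h'))

lemma uso_pair_count {O : (∀ i, Fin (n i)) -> (∀ i, Fin (n i)) -> Prop}
    (hO : IsUSO O) (s : Fin r → ℕ) (hs : ∀ i, 1 ≤ s i) :
    ∑ x : ∀ i, Fin (n i), ∏ i, (n i - 1 - rf O x i).choose (s i - 1)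
      = ∏ i, (n i).choose (s i) := by
  classical
  set T : Finset (∀ i, Finset (Fin (n i))) :=
    Fintype.piFinset (fun i => (univ : Finset (Fin (n i))).powersetCard (s i)) with hT
  have hTcard : T.card = ∏ i, (n i).choose (s i) := by
    simp [hT, Fintype.card_piFinset, Finset.card_powersetCard]
  -- each subgrid in T has exactly one sink
  have hone : ∀ S ∈ T, (univ.filter (fun x => IsSinkIn O S x)).card = 1 := by
    intro S hS
    have hne : ∀ i, (S i).Nonempty := by
      intro i
      have := (Fintype.mem_piFinset.mp hS) i
      rw [Finset.mem_powersetCard] at this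
      exact Finset.card_pos.mp (by rw [this.2]; exact hs i)
    obtain ⟨x₀, hx₀, huniq⟩ := hO.2 S hne
    rw [Finset.card_eq_one]
    refine ⟨x₀, ?_⟩
    ext z
    simp only [Finset.mem_filter, Finset.mem_univ, true_and, Finset.mem_singleton]
    exact ⟨fun h => huniq z h, fun h => h ▸ hx₀⟩
  -- double counting
  have hswap : ∑ S ∈ T, (univ.filter (fun x => IsSinkIn O S x)).card
      = ∑ x : ∀ i, Fin (n i), (T.filter (fun S => IsSinkIn O S x)).card := by
    simp only [Finset.card_filter]
    exact Finset.sum_comm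
  -- per-vertex count
  have hper : ∀ x : ∀ i, Fin (n i), (T.filter (fun S => IsSinkIn O S x)).card
      = ∏ i, (n i - 1 - rf O x i).choose (s i - 1) := by
    intro x
    have hB : (Fintype.piFinset (fun i => (usoIns O x i).powersetCard (s i - 1))).card
        = ∏ i, (n i - 1 - rf O x i).choose (s i - 1) := by
      simp [Fintype.card_piFinset, Finset.card_powersetCard, uso_card_Ins]
    rw [← hB]
    apply Finset.card_bij (fun S _ => fun i => (S i).erase (x i))
    · -- maps to
      intro S hS
      rw [Finset.mem_filter] at hS
      obtain ⟨hST, hsink⟩ := hS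
      rw [uso_sink_iff hO.1] at hsink
      rw [Fintype.mem_piFinset]
      intro i
      rw [Finset.mem_powersetCard]
      constructor
      · intro c hc
        rw [Finset.mem_erase] at hc
        simp only [usoIns, Finset.mem_filter, Finset.mem_univ, true_and]
        exact ⟨hc.1, hsink.2 i c hc.2 hc.1⟩
      · rw [Finset.card_erase_of_mem (hsink.1 i)]
        have := (Fintype.mem_piFinset.mp hST) i
        rw [Finset.mem_powersetCard] at this
        rw [this.2]
    · -- injective
      intro S₁ h₁ S₂ h₂ heq
      rw [Finset.mem_filter] at h₁ h₂
      have hx₁ := ((uso_sink_iff hO.1 _ _).mp h₁.2).1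
      have hx₂ := ((uso_sink_iff hO.1 _ _).mp h₂.2).1
      funext i
      have := congrFun heq i
      rw [← Finset.insert_erase (hx₁ i), ← Finset.insert_erase (hx₂ i), this]
    · -- surjective
      intro Tt hTt
      rw [Fintype.mem_piFinset] at hTt
      have hsub : ∀ i, Tt i ⊆ usoIns O x i := fun i =>
        ((Finset.mem_powersetCard.mp (hTt i)).1)
      have hcard : ∀ i, (Tt i).card = s i - 1 := fun i =>
        ((Finset.mem_powersetCard.mp (hTt i)).2)
      have hxnot : ∀ i, x i ∉ Tt i := by
        intro i hmem
        have := hsub i hmem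
        simp [usoIns] at this
      refine ⟨fun i => insert (x i) (Tt i), ?_, ?_⟩
      · rw [Finset.mem_filter]
        constructor
        · rw [Fintype.mem_piFinset]
          intro i
          rw [Finset.mem_powersetCard]
          refine ⟨Finset.subset_univ _, ?_⟩
          rw [Finset.card_insert_of_notMem (hxnot i), hcard i]
          have := hs i; omega
        · rw [uso_sink_iff hO.1]
          refine ⟨fun i => Finset.mem_insert_self _ _, fun i c hc hne => ?_⟩
          have hcT : c ∈ Tt i := by
            rcases Finset.mem_insert.mp hc with h | h
            · exact absurd h hne
            · exact h
          have := hsub i hcT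
          simp only [usoIns, Finset.mem_filter, Finset.mem_univ, true_and] at this
          exact this.2
      · funext i
        exact Finset.erase_insert (hxnot i)
  calc ∑ x : ∀ i, Fin (n i), ∏ i, (n i - 1 - rf O x i).choose (s i - 1)
      = ∑ x : ∀ i, Fin (n i), (T.filter (fun S => IsSinkIn O S x)).card := by
        exact (Finset.sum_congr rfl (fun x _ => (hper x))).symm
    _ = ∑ S ∈ T, (univ.filter (fun x => IsSinkIn O S x)).card := hswap.symm
    _ = ∑ S ∈ T, 1 := Finset.sum_congr rfl hone
    _ = T.card := by simp
    _ = ∏ i, (n i).choose (s i) := hTcard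

lemma uso_hockey (N a : ℕ) (h : a < N) :
    ∑ j ∈ Finset.range (a + 1), (N - 1 - j).choose (N - 1 - a) = N.choose (N - a) := by
  have key : ∑ j ∈ Finset.range (a + 1), (N - 1 - j).choose (N - 1 - a)
      = ∑ m ∈ Finset.Icc (N - 1 - a) (N - 1), m.choose (N - 1 - a) := by
    apply Finset.sum_nbij' (i := fun j => N - 1 - j) (j := fun m => N - 1 - m)
    · intro j hj
      rw [Finset.mem_range] at hj
      rw [Finset.mem_Icc]
      omega
    · intro m hm
      rw [Finset.mem_Icc] at hm
      rw [Finset.mem_range]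
      omega
    · intro j hj
      rw [Finset.mem_range] at hj
      omega
    · intro m hm
      rw [Finset.mem_Icc] at hm
      omega
    · intro j hj
      rfl
  rw [key, Nat.sum_Icc_choose]
  congr 1 <;> omega

lemma uso_fiber_card {O : (∀ i, Fin (n i)) -> (∀ i, Fin (n i)) -> Prop}
    (hO : IsUSO O) :
    ∀ N (a : Fin r → ℕ), (∑ i, a i) = N → (∀ i, a i < n i) →
      (univ.filter (fun x : ∀ i, Fin (n i) => (fun i => rf O x i) = a)).card = 1 := by
  intro N
  induction N using Nat.strong_induction_on with
  | _ N IH =>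
    intro a hsum ha
    classical
    set F : (Fin r → ℕ) → ℕ :=
      fun b => ∏ i, (n i - 1 - b i).choose (n i - 1 - a i) with hF
    set m : (Fin r → ℕ) → ℕ :=
      fun b => (univ.filter (fun x : ∀ i, Fin (n i) => (fun i => rf O x i) = b)).card with hm
    have hFa : F a = 1 := by simp [hF]
    -- the key identity from double counting
    have key : ∑ x : ∀ i, Fin (n i), F (fun i => rf O x i) = ∏ i, (n i).choose (n i - a i) := by
      have := uso_pair_count hO (fun i => n i - a i) (fun i => by show 1 ≤ n i - a i; have := ha i; omega)
      rw [← this]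
      apply Finset.sum_congr rfl
      intro x _
      apply Finset.prod_congr rfl
      intro i _
      congr 1
      show n i - 1 - a i = n i - a i - 1
      omega
    -- group by fibers
    set B : Finset (Fin r → ℕ) := Fintype.piFinset (fun i => Finset.range (n i)) with hB
    have hmapsto : ∀ x ∈ (univ : Finset (∀ i, Fin (n i))), (fun i => rf O x i) ∈ B := by
      intro x _
      rw [hB, Fintype.mem_piFinset]
      intro i
      rw [Finset.mem_range]
      have h1 := uso_rf_le O x i
      have h2 := ha i
      omega
    have hgroup : ∑ x : ∀ i, Fin (n i), F (fun i => rf O x i) = ∑ b ∈ B, m b * F b := by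
      rw [← Finset.sum_fiberwise_of_maps_to hmapsto (fun x => F (fun i => rf O x i))]
      apply Finset.sum_congr rfl
      intro b _
      have : ∀ x ∈ univ.filter (fun x : ∀ i, Fin (n i) => (fun i => rf O x i) = b),
          F (fun i => rf O x i) = F b := by
        intro x hx
        rw [(Finset.mem_filter.mp hx).2]
      rw [Finset.sum_congr rfl this, Finset.sum_const, hm, smul_eq_mul]
    -- hockey-stick evaluation of the full triangular sum
    set B' : Finset (Fin r → ℕ) := Fintype.piFinset (fun i => Finset.range (a i + 1)) with hB'
    have hhs : ∑ b ∈ B', F b = ∏ i, (n i).choose (n i - a i) := by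
      show ∑ b ∈ Fintype.piFinset (fun i => Finset.range (a i + 1)),
          ∏ i, (n i - 1 - b i).choose (n i - 1 - a i) = ∏ i, (n i).choose (n i - a i)
      have hp := Finset.prod_univ_sum (κ := fun _ => ℕ) (fun i => Finset.range (a i + 1))
        (fun i j => (n i - 1 - j).choose (n i - 1 - a i))
      rw [← hp]
      apply Finset.prod_congr rfl
      intro i _
      exact uso_hockey (n i) (a i) (ha i)
    have haB : a ∈ B := by
      rw [hB, Fintype.mem_piFinset]; intro i; rw [Finset.mem_range]; exact ha i
    have haB' : a ∈ B' := by
      rw [hB', Fintype.mem_piFinset]; intro i; rw [Finset.mem_range]; omega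
    -- remainder sums agree
    have hrem : ∑ b ∈ B.erase a, m b * F b = ∑ b ∈ B'.erase a, F b := by
      have hsub : B'.erase a ⊆ B.erase a := by
        apply Finset.erase_subset_erase
        rw [hB, hB']
        intro b hb
        rw [Fintype.mem_piFinset] at hb ⊢
        intro i
        have := hb i
        rw [Finset.mem_range] at this ⊢
        have := ha i
        omega
      have hzero : ∀ b ∈ B.erase a, b ∉ B'.erase a → m b * F b = 0 := by
        intro b hb hnb
        have hbne : b ≠ a := (Finset.mem_erase.mp hb).1
        have hbB : b ∈ B := (Finset.mem_erase.mp hb).2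
        have hnB' : b ∉ B' := fun h => hnb (Finset.mem_erase.mpr ⟨hbne, h⟩)
        rw [hB', Fintype.mem_piFinset] at hnB'
        push_neg at hnB'
        obtain ⟨i, hi⟩ := hnB'
        rw [Finset.mem_range] at hi
        push_neg at hi
        have hbBi : b i < n i := by
          rw [hB, Fintype.mem_piFinset] at hbB
          have := hbB i
          rwa [Finset.mem_range] at this
        have hchoose : (n i - 1 - b i).choose (n i - 1 - a i) = 0 := by
          apply Nat.choose_eq_zero_of_lt
          have := ha i
          omega
        have : F b = 0 := by
          rw [hF]
          exact Finset.prod_eq_zero (Finset.mem_univ i) hchoose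
        rw [this, Nat.mul_zero]
      rw [← Finset.sum_subset hsub (fun b hb hnb => hzero b hb hnb)]
      apply Finset.sum_congr rfl
      intro b hb
      have hbne : b ≠ a := (Finset.mem_erase.mp hb).1
      have hble : ∀ i, b i ≤ a i := by
        intro i
        have := (Finset.mem_erase.mp hb).2
        rw [hB', Fintype.mem_piFinset] at this
        have := this i
        rw [Finset.mem_range] at this
        omega
      have hlt : ∑ i, b i < ∑ i, a i := by
        obtain ⟨i, hi⟩ := Function.ne_iff.mp hbne
        apply Finset.sum_lt_sum (fun i _ => hble i)
        exact ⟨i, Finset.mem_univ i, lt_of_le_of_ne (hble i) hi⟩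
      have hmb : m b = 1 := by
        rw [hm]
        exact IH (∑ i, b i) (hsum ▸ hlt) b rfl (fun i => lt_of_le_of_lt (hble i) (ha i))
      rw [hmb, Nat.one_mul]
    -- combine
    have e1 : m a * F a + ∑ b ∈ B.erase a, m b * F b = ∑ b ∈ B, m b * F b :=
      Finset.add_sum_erase B (fun b => m b * F b) haB
    have e2 : F a + ∑ b ∈ B'.erase a, F b = ∑ b ∈ B', F b :=
      Finset.add_sum_erase B' F haB'
    have : m a * F a + ∑ b ∈ B.erase a, m b * F b
        = F a + ∑ b ∈ B'.erase a, F b := by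
      rw [e1, e2, ← hgroup, key, hhs]
    rw [hrem, hFa] at this
    have : m a = 1 := by omega
    exact this


/-- in a unique sink orientation of the grid `[n 0] × ⋯ × [n (r-1)]`, the refined
index `x ↦ (rf₁ x, ..., rf_r x)` is a bijection onto `{0,...,n 0 - 1} × ⋯ × {0,...,n (r-1) - 1}`. -/
theorem refined_index_bijective (r : Nat) (n : Fin r -> Nat) (hn : ∀ i, 0 < n i)
    (O : (∀ i, Fin (n i)) -> (∀ i, Fin (n i)) -> Prop) (hO : IsUSO O) :
    Set.BijOn (fun x i => rf O x i) Set.univ {f : Fin r -> Nat | ∀ i, f i < n i} := by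
  classical
  have hlt : ∀ (x : ∀ i, Fin (n i)) i, rf O x i < n i := by
    intro x i
    have h1 := uso_rf_le O x i
    have h2 := hn i
    omega
  have hfib : ∀ a : Fin r → ℕ, (∀ i, a i < n i) →
      (univ.filter (fun x : ∀ i, Fin (n i) => (fun i => rf O x i) = a)).card = 1 :=
    fun a ha => uso_fiber_card hO (∑ i, a i) a rfl ha
  refine ⟨fun x _ => fun i => hlt x i, ?_, ?_⟩
  · intro x _ y _ hxy
    have hb : ∀ i, rf O x i < n i := hlt x
    obtain ⟨z, hz⟩ := Finset.card_eq_one.mp (hfib (fun i => rf O x i) hb)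
    have hxz : x ∈ univ.filter (fun w : ∀ i, Fin (n i) =>
        (fun i => rf O w i) = (fun i => rf O x i)) := by
      simp
    have hyz : y ∈ univ.filter (fun w : ∀ i, Fin (n i) =>
        (fun i => rf O w i) = (fun i => rf O x i)) := by
      simp only [Finset.mem_filter, Finset.mem_univ, true_and]
      exact hxy.symm
    rw [hz, Finset.mem_singleton] at hxz hyz
    rw [hxz, hyz]
  · intro f hf
    have := hfib f hf
    obtain ⟨z, hz⟩ := Finset.card_eq_one.mp this
    have hzmem : z ∈ univ.filter (fun x : ∀ i, Fin (n i) => (fun i => rf O x i) = f) := by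
      rw [hz]; exact Finset.mem_singleton_self z
    rw [Finset.mem_filter] at hzmem
    exact ⟨z, Set.mem_univ z, hzmem.2⟩
end

section
/- A unique sink orientation of a grid is uniquely determined by its refined index: if two USOs O and O' of the grid [n₁] × ... × [n_r] have rf_O(x) = rf_{O'}(x) for all vertices x, then O = O'. -/
open Function

lemma gridAdj_symm {r : Nat} {n : Fin r → Nat} {x y : ∀ i, Fin (n i)}
    (h : GridAdj x y) : GridAdj y x := by
  obtain ⟨i, hne, heq⟩ := h
  exact ⟨i, Ne.symm hne, fun j hj => (heq j hj).symm⟩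

lemma gridAdj_update {r : Nat} {n : Fin r → Nat} (x : ∀ i, Fin (n i)) (i : Fin r)
    {a b : Fin (n i)} (hab : a ≠ b) :
    GridAdj (update x i a) (update x i b) := by
  refine ⟨i, ?_, fun j hj => ?_⟩
  · simpa using hab
  · simp [Function.update_of_ne hj]

lemma ne_of_line_edge {r : Nat} {n : Fin r → Nat}
    {O : (∀ i, Fin (n i)) → (∀ i, Fin (n i)) → Prop} (hO : IsUSO O)
    {x : ∀ i, Fin (n i)} {i : Fin r} {a b : Fin (n i)}
    (hab : O (update x i a) (update x i b)) : a ≠ b := by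
  rintro rfl
  obtain ⟨j, hne, -⟩ := hO.1.1 _ _ hab
  exact hne rfl

lemma uso_line_trans {r : Nat} {n : Fin r → Nat}
    {O : (∀ i, Fin (n i)) → (∀ i, Fin (n i)) → Prop} (hO : IsUSO O)
    (x : ∀ i, Fin (n i)) (i : Fin r) {a b c : Fin (n i)}
    (hab : O (update x i a) (update x i b)) (hbc : O (update x i b) (update x i c)) :
    O (update x i a) (update x i c) := by
  classical
  have hab' : a ≠ b := ne_of_line_edge hO hab
  have hbc' : b ≠ c := ne_of_line_edge hO hbc
  have hac' : a ≠ c := by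
    rintro rfl
    exact (hO.1.2 _ _ (gridAdj_update x i hab')).mp hab hbc
  by_contra hac
  have hca : O (update x i c) (update x i a) :=
    (hO.1.2 _ _ (gridAdj_update x i hac'.symm)).mpr hac
  set S : ∀ j, Finset (Fin (n j)) := fun j => Finset.univ.filter
    (fun v => v = update x i a j ∨ v = update x i b j ∨ v = update x i c j) with hS
  have hmem : ∀ d : Fin (n i), (d = a ∨ d = b ∨ d = c) → ∀ j, update x i d j ∈ S j := by
    intro d hd j
    simp only [hS, Finset.mem_filter, Finset.mem_univ, true_and]
    by_cases hj : j = i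
    · subst hj; simpa using hd
    · simp [Function.update_of_ne hj]
  have hSne : ∀ j, (S j).Nonempty := fun j => ⟨update x i a j, hmem a (Or.inl rfl) j⟩
  obtain ⟨z, hz, -⟩ := hO.2 S hSne
  have hz_eq : z = update x i (z i) := by
    funext j
    by_cases hj : j = i
    · subst hj; simp
    · have := hz.1 j
      simp only [hS, Finset.mem_filter, Finset.mem_univ, true_and,
        Function.update_of_ne hj] at this
      simp only [Function.update_of_ne hj]
      tauto
  have hzi : z i = a ∨ z i = b ∨ z i = c := by
    have := hz.1 i
    simpa [hS] using this
  rcases hzi with h | h | h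
  · have hz' : z = update x i a := by rw [hz_eq, h]
    have := hz.2 (update x i b) (hmem b (Or.inr (Or.inl rfl)))
      (by rw [hz']; exact gridAdj_update x i hab')
    rw [hz'] at this
    exact (hO.1.2 _ _ (gridAdj_update x i hab')).mp hab this
  · have hz' : z = update x i b := by rw [hz_eq, h]
    have := hz.2 (update x i c) (hmem c (Or.inr (Or.inr rfl)))
      (by rw [hz']; exact gridAdj_update x i hbc')
    rw [hz'] at this
    exact (hO.1.2 _ _ (gridAdj_update x i hbc')).mp hbc this
  · have hz' : z = update x i c := by rw [hz_eq, h]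
    have := hz.2 (update x i a) (hmem a (Or.inl rfl))
      (by rw [hz']; exact gridAdj_update x i hac'.symm)
    rw [hz'] at this
    exact hac this

lemma rf_eq_ncard {r : Nat} {n : Fin r → Nat}
    (O : (∀ i, Fin (n i)) → (∀ i, Fin (n i)) → Prop)
    (x : ∀ i, Fin (n i)) (i : Fin r) (a : Fin (n i)) :
    rf O (update x i a) i = {c : Fin (n i) | c ≠ a ∧ O (update x i a) (update x i c)}.ncard := by
  rw [rf]
  simp_rw [Function.update_idem, Function.update_self]
  exact Nat.card_coe_set_eq _

lemma rf_lt {r : Nat} {n : Fin r → Nat}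
    {O : (∀ i, Fin (n i)) → (∀ i, Fin (n i)) → Prop} (hO : IsUSO O)
    (x : ∀ i, Fin (n i)) (i : Fin r) {a b : Fin (n i)}
    (hab : O (update x i a) (update x i b)) :
    rf O (update x i b) i < rf O (update x i a) i := by
  have hab' : a ≠ b := ne_of_line_edge hO hab
  rw [rf_eq_ncard, rf_eq_ncard]
  set A : Set (Fin (n i)) := {c | c ≠ a ∧ O (update x i a) (update x i c)} with hA
  set B : Set (Fin (n i)) := {c | c ≠ b ∧ O (update x i b) (update x i c)} with hB
  have hBA : B ⊆ A := by
    rintro c ⟨hcb, hc⟩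
    have hca : c ≠ a := by
      rintro rfl
      exact (hO.1.2 _ _ (gridAdj_update x i hab')).mp hab hc
    exact ⟨hca, uso_line_trans hO x i hab hc⟩
  have hbA : b ∈ A := ⟨hab'.symm, hab⟩
  have hbB : b ∉ B := fun h => h.1 rfl
  exact Set.ncard_lt_ncard ⟨hBA, fun hAB => hbB (hAB hbA)⟩ (Set.toFinite A)

/-- a USO of a grid is uniquely determined by its refined index. -/
theorem uso_determined_by_refined_index (r : Nat) (n : Fin r -> Nat)
    (O O' : (∀ i, Fin (n i)) -> (∀ i, Fin (n i)) -> Prop)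
    (hO : IsUSO O) (hO' : IsUSO O')
    (hrf : ∀ x i, rf O x i = rf O' x i) :
    ∀ x y, O x y ↔ O' x y := by
  suffices h : ∀ (P P' : (∀ i, Fin (n i)) -> (∀ i, Fin (n i)) -> Prop),
      IsUSO P → IsUSO P' → (∀ x i, rf P x i = rf P' x i) → ∀ x y, P x y → P' x y by
    intro x y
    exact ⟨h O O' hO hO' hrf x y, h O' O hO' hO (fun x i => (hrf x i).symm) x y⟩
  intro P P' hP hP' hrfP x y hxy
  obtain ⟨i, hne, heq⟩ := hP.1.1 x y hxy
  have hx : x = update x i (x i) := (Function.update_eq_self i x).symm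
  have hy : y = update x i (y i) := by
    funext j
    by_cases hj : j = i
    · subst hj; simp
    · simp [Function.update_of_ne hj, (heq j hj).symm]
  have hxy' : P (update x i (x i)) (update x i (y i)) := by rw [← hx, ← hy]; exact hxy
  have h1 := rf_lt hP x i hxy'
  rw [hrfP, hrfP] at h1
  by_contra hP'xy
  have hP'yx : P' (update x i (y i)) (update x i (x i)) := by
    rw [← hx, ← hy]
    exact (hP'.1.2 y x (gridAdj_symm ⟨i, hne, heq⟩)).mpr hP'xy
  have h2 := rf_lt hP' x i hP'yx
  omega
end

section
/- Let χ be a 3-signotope on [n] interpreted via the graph G_χ on 2-subsets of [n], where R, R' with |R ∩ R'| = 1 are joined by an edge directed from the lexicographically smaller to the lexicographically larger set if χ(R ∪ R') = + and reversed otherwise. Then G_χ is acyclic. -/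
/-- The directed graph `G_χ` on `2`-subsets of `[n]`: `R` and `R'` sharing exactly one element
are joined by an edge, directed from the lexicographically smaller to the lexicographically
larger set iff `chi (R ∪ R') = +` (and reversed otherwise). -/
def pairDir (n : Nat) (chi : Finset Nat -> Bool) (R R' : Finset Nat) : Prop :=
  R ⊆ Finset.Icc 1 n ∧ R' ⊆ Finset.Icc 1 n ∧ R.card = 2 ∧ R'.card = 2 ∧
    (R ∩ R').card = 1 ∧
    ((List.Lex (fun a b : Nat => a < b)
        (R.sort (fun a b => a <= b)) (R'.sort (fun a b => a <= b)) ∧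
      chi (R ∪ R') = true) ∨
     (List.Lex (fun a b : Nat => a < b)
        (R'.sort (fun a b => a <= b)) (R.sort (fun a b => a <= b)) ∧
      chi (R ∪ R') = false))

namespace PairAcyclicAux

/- Permutation lemmas for triple Finsets. -/
lemma tri_perm1 (x y z : ℕ) : ({x, y, z} : Finset ℕ) = {y, x, z} :=
  Finset.insert_comm x y {z}

lemma tri_perm2 (x y z : ℕ) : ({x, y, z} : Finset ℕ) = {x, z, y} := by
  rw [Finset.pair_comm y z]

lemma sort_pair {a b : ℕ} (h : a < b) :
    ({a, b} : Finset ℕ).sort (fun x y => x ≤ y) = [a, b] := by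
  rw [Finset.sort_insert, Finset.sort_singleton]
  · intro c hc; rw [Finset.mem_singleton] at hc; omega
  · rw [Finset.mem_singleton]; omega

lemma sort_quad {a b c d : ℕ} (hab : a < b) (hbc : b < c) (hcd : c < d) :
    ({a, b, c, d} : Finset ℕ).sort (fun x y => x ≤ y) = [a, b, c, d] := by
  rw [Finset.sort_insert, Finset.sort_insert, sort_pair hcd]
  · intro x hx; simp at hx; omega
  · simp; omega
  · intro x hx; simp at hx; omega
  · simp; omega

lemma card_quad {a b c d : ℕ} (hab : a < b) (hbc : b < c) (hcd : c < d) :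
    ({a, b, c, d} : Finset ℕ).card = 4 := by
  rw [Finset.card_insert_of_notMem (by simp; omega),
      Finset.card_insert_of_notMem (by simp; omega),
      Finset.card_insert_of_notMem (by simp; omega), Finset.card_singleton]

lemma tofin3 {x y z : ℕ} : ([x, y, z] : List ℕ).toFinset = ({x, y, z} : Finset ℕ) := by
  simp

/-- The signotope condition instantiated on a sorted 4-set. -/
lemma quad {n : ℕ} {chi : Finset ℕ → Bool} (hchi : IsSignotopeOn 3 (Finset.Icc 1 n) chi)
    {a b c d : ℕ} (h1 : 1 ≤ a) (hab : a < b) (hbc : b < c) (hcd : c < d) (hdn : d ≤ n) :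
    signChanges [chi {b, c, d}, chi {a, c, d}, chi {a, b, d}, chi {a, b, c}] ≤ 1 := by
  have hsub : ({a, b, c, d} : Finset ℕ) ⊆ Finset.Icc 1 n := by
    intro x hx; simp at hx; rw [Finset.mem_Icc]; rcases hx with rfl | rfl | rfl | rfl <;> omega
  have hcard := card_quad hab hbc hcd
  have h := hchi _ hsub hcard
  rw [delSeq, hcard, sort_quad hab hbc hcd] at h
  have hred : (List.range 4).map
      (fun i => chi ((([a, b, c, d] : List ℕ).eraseIdx i).toFinset)) =
      [chi ([b, c, d] : List ℕ).toFinset, chi ([a, c, d] : List ℕ).toFinset,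
       chi ([a, b, d] : List ℕ).toFinset, chi ([a, b, c] : List ℕ).toFinset] := rfl
  rw [hred, tofin3, tofin3, tofin3, tofin3] at h
  exact h

lemma sc_prefix : ∀ s1 s2 s3 s4 : Bool,
    signChanges [s1, s2, s3, s4] ≤ 1 → signChanges [s1, s2, s3] ≤ 1 := by decide

lemma lex_pair_elim {p q r s : ℕ} (h : List.Lex (fun x y : ℕ => x < y) [p, q] [r, s]) :
    p < r ∨ (p = r ∧ q < s) := by
  cases h with
  | rel h => exact Or.inl h
  | cons h =>
    cases h with
    | rel h => exact Or.inr ⟨rfl, h⟩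
    | cons h => cases h

lemma lex_lt {a b c : ℕ} (hab : a ≠ b) (hbc : b ≠ c) (hac : a ≠ c)
    (h : List.Lex (fun x y : ℕ => x < y) (({a, b} : Finset ℕ).sort (fun x y => x ≤ y))
      (({b, c} : Finset ℕ).sort (fun x y => x ≤ y))) : a < c := by
  rcases Nat.lt_or_ge a b with h1 | h1
  · rcases Nat.lt_or_ge b c with h2 | h2
    · omega
    · rw [sort_pair h1, Finset.pair_comm b c, sort_pair (by omega : c < b)] at h
      rcases lex_pair_elim h with h' | ⟨h', _⟩
      · exact h'
      · exact absurd h' hac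
  · rw [Finset.pair_comm a b, sort_pair (by omega : b < a)] at h
    rcases Nat.lt_or_ge b c with h2 | h2
    · rw [sort_pair h2] at h
      rcases lex_pair_elim h with h' | ⟨_, h''⟩
      · omega
      · exact h''
    · rw [Finset.pair_comm b c, sort_pair (by omega : c < b)] at h
      rcases lex_pair_elim h with h' | ⟨h', _⟩
      · omega
      · exact absurd h' hbc

/-- Destructure an edge of `G_χ`. -/
lemma edge_form {n : ℕ} {chi : Finset ℕ → Bool} {R R' : Finset ℕ} (h : pairDir n chi R R') :
    ∃ a b c : ℕ, a ≠ b ∧ b ≠ c ∧ a ≠ c ∧ R = {a, b} ∧ R' = {b, c} ∧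
      a ∈ Finset.Icc 1 n ∧ b ∈ Finset.Icc 1 n ∧ c ∈ Finset.Icc 1 n ∧
      ((a < c ∧ chi {a, b, c} = true) ∨ (c < a ∧ chi {a, b, c} = false)) := by
  obtain ⟨hR, hR', hc2, hc2', hc1, hdir⟩ := h
  obtain ⟨b, hbeq⟩ := Finset.card_eq_one.mp hc1
  have hbRR' : b ∈ R ∩ R' := hbeq ▸ Finset.mem_singleton_self b
  have hbR : b ∈ R := (Finset.mem_inter.mp hbRR').1
  have hbR' : b ∈ R' := (Finset.mem_inter.mp hbRR').2
  obtain ⟨x, y, hxy, hRxy⟩ := Finset.card_eq_two.mp hc2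
  obtain ⟨u, v, huv, hRuv⟩ := Finset.card_eq_two.mp hc2'
  have hbxy : b = x ∨ b = y := by rw [hRxy] at hbR; simpa using hbR
  have hbuv : b = u ∨ b = v := by rw [hRuv] at hbR'; simpa using hbR'
  obtain ⟨a, hab, hRab⟩ : ∃ a, a ≠ b ∧ R = {a, b} := by
    rcases hbxy with rfl | rfl
    · exact ⟨y, Ne.symm hxy, hRxy.trans (Finset.pair_comm b y)⟩
    · exact ⟨x, hxy, hRxy⟩
  obtain ⟨c, hcb, hR'cb⟩ : ∃ c, c ≠ b ∧ R' = {b, c} := by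
    rcases hbuv with rfl | rfl
    · exact ⟨v, Ne.symm huv, hRuv⟩
    · exact ⟨u, huv, hRuv.trans (Finset.pair_comm u b)⟩
  have hac : a ≠ c := by
    intro hacc
    have haR : a ∈ R := by rw [hRab]; simp
    have haR' : a ∈ R' := by rw [hR'cb]; simp [hacc]
    have : a ∈ ({b} : Finset ℕ) := hbeq ▸ Finset.mem_inter.mpr ⟨haR, haR'⟩
    exact hab (Finset.mem_singleton.mp this)
  have haI : a ∈ Finset.Icc 1 n := hR (by rw [hRab]; simp)
  have hbI : b ∈ Finset.Icc 1 n := hR hbR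
  have hcI : c ∈ Finset.Icc 1 n := hR' (by rw [hR'cb]; simp)
  have hU : R ∪ R' = ({a, b, c} : Finset ℕ) := by
    rw [hRab, hR'cb]
    ext t
    simp
  rcases hdir with ⟨hlex, hsign⟩ | ⟨hlex, hsign⟩
  · rw [hU] at hsign
    rw [hRab, hR'cb] at hlex
    exact ⟨a, b, c, hab, Ne.symm hcb, hac, hRab, hR'cb, haI, hbI, hcI,
      Or.inl ⟨lex_lt hab (Ne.symm hcb) hac hlex, hsign⟩⟩
  · rw [hU] at hsign
    rw [hRab, hR'cb] at hlex
    rw [Finset.pair_comm b c, Finset.pair_comm a b] at hlex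
    exact ⟨a, b, c, hab, Ne.symm hcb, hac, hRab, hR'cb, haI, hbI, hcI,
      Or.inr ⟨lex_lt hcb (Ne.symm hab) (Ne.symm hac) hlex, hsign⟩⟩

/-- The "star" tournament on pairs containing the top element `T`. -/
def Prec (chi : Finset ℕ → Bool) (T i j : ℕ) : Prop :=
  (i < j ∧ chi {i, j, T} = true) ∨ (j < i ∧ chi {j, i, T} = false)

instance (chi : Finset ℕ → Bool) (T i j : ℕ) : Decidable (Prec chi T i j) := by
  unfold Prec; infer_instance

lemma prec_asymm {chi : Finset ℕ → Bool} {T i j : ℕ}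
    (h1 : Prec chi T i j) (h2 : Prec chi T j i) : False := by
  rcases h1 with ⟨ha, hb⟩ | ⟨ha, hb⟩ <;> rcases h2 with ⟨hc, hd⟩ | ⟨hc, hd⟩
  · omega
  · rw [hb] at hd; exact Bool.noConfusion hd
  · rw [hb] at hd; exact Bool.noConfusion hd
  · omega

lemma prec_trans {n : ℕ} {chi : Finset ℕ → Bool}
    (hchi : IsSignotopeOn 3 (Finset.Icc 1 (n + 1)) chi)
    {k i j : ℕ} (hk : k ∈ Finset.Icc 1 n) (hi : i ∈ Finset.Icc 1 n) (hj : j ∈ Finset.Icc 1 n)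
    (h1 : Prec chi (n + 1) k i) (h2 : Prec chi (n + 1) i j) : Prec chi (n + 1) k j := by
  simp only [Finset.mem_Icc] at hk hi hj
  by_cases hkj : k = j
  · subst hkj; exact (prec_asymm h2 h1).elim
  rcases h1 with ⟨hlt1, hc1⟩ | ⟨hlt1, hc1⟩ <;> rcases h2 with ⟨hlt2, hc2⟩ | ⟨hlt2, hc2⟩
  · -- k < i < j
    have hq := sc_prefix _ _ _ _
      (quad hchi (by omega) hlt1 hlt2 (by omega) (le_refl (n + 1)))
    rw [hc1, hc2] at hq
    refine Or.inl ⟨by omega, ?_⟩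
    revert hq; cases chi ({k, j, n + 1} : Finset ℕ) <;> decide
  · -- k < i, j < i
    rcases Nat.lt_or_ge k j with hkj2 | hkj2
    · -- k < j < i
      have hq := sc_prefix _ _ _ _
        (quad hchi (by omega) hkj2 hlt2 (by omega) (le_refl (n + 1)))
      rw [hc1, hc2] at hq
      refine Or.inl ⟨hkj2, ?_⟩
      revert hq; cases chi ({k, j, n + 1} : Finset ℕ) <;> decide
    · -- j < k < i
      have hjk : j < k := by omega
      have hq := sc_prefix _ _ _ _
        (quad hchi (by omega) hjk hlt1 (by omega) (le_refl (n + 1)))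
      rw [hc1, hc2] at hq
      refine Or.inr ⟨hjk, ?_⟩
      revert hq; cases chi ({j, k, n + 1} : Finset ℕ) <;> decide
  · -- i < k, i < j
    rcases Nat.lt_or_ge k j with hkj2 | hkj2
    · -- i < k < j
      have hq := sc_prefix _ _ _ _
        (quad hchi (by omega) hlt1 hkj2 (by omega) (le_refl (n + 1)))
      rw [hc1, hc2] at hq
      refine Or.inl ⟨hkj2, ?_⟩
      revert hq; cases chi ({k, j, n + 1} : Finset ℕ) <;> decide
    · -- i < j < k
      have hjk : j < k := by omega
      have hq := sc_prefix _ _ _ _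
        (quad hchi (by omega) hlt2 hjk (by omega) (le_refl (n + 1)))
      rw [hc1, hc2] at hq
      refine Or.inr ⟨hjk, ?_⟩
      revert hq; cases chi ({j, k, n + 1} : Finset ℕ) <;> decide
  · -- j < i < k
    have hq := sc_prefix _ _ _ _
      (quad hchi (by omega) hlt2 hlt1 (by omega) (le_refl (n + 1)))
    rw [hc1, hc2] at hq
    refine Or.inr ⟨by omega, ?_⟩
    revert hq; cases chi ({j, k, n + 1} : Finset ℕ) <;> decide

/-- KEY: an edge of `G_χ` never goes from a pair with `χ(P∪{n+1}) = -` to a pair with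
`χ(P'∪{n+1}) = +`. -/
lemma key {n : ℕ} {chi : Finset ℕ → Bool}
    (hchi : IsSignotopeOn 3 (Finset.Icc 1 (n + 1)) chi)
    {a b c : ℕ} (ha : a ∈ Finset.Icc 1 n) (hb : b ∈ Finset.Icc 1 n) (hc : c ∈ Finset.Icc 1 n)
    (hab : a ≠ b) (hbc : b ≠ c) (hac : a ≠ c)
    (hdir : (a < c ∧ chi {a, b, c} = true) ∨ (c < a ∧ chi {a, b, c} = false))
    (h1 : chi {a, b, n + 1} = false) (h2 : chi {b, c, n + 1} = true) : False := by
  simp only [Finset.mem_Icc] at ha hb hc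
  rcases hdir with ⟨hlt, hs⟩ | ⟨hlt, hs⟩
  · -- a < c, chi {a,b,c} = true
    rcases Nat.lt_or_ge b a with hba | hba
    · -- b < a < c
      have h := quad hchi (by omega) hba hlt (by omega) (le_refl (n + 1))
      rw [tri_perm1 b a (n + 1), tri_perm1 b a c, h1, h2, hs] at h
      revert h; cases chi ({a, c, n + 1} : Finset ℕ) <;> decide
    · rcases Nat.lt_or_ge b c with hbc2 | hbc2
      · -- a < b < c
        have hab2 : a < b := by omega
        have h := quad hchi (by omega) hab2 hbc2 (by omega) (le_refl (n + 1))
        rw [h1, h2, hs] at h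
        revert h; cases chi ({a, c, n + 1} : Finset ℕ) <;> decide
      · -- a < c < b
        have hcb : c < b := by omega
        have h := quad hchi (by omega) hlt hcb (by omega) (le_refl (n + 1))
        rw [tri_perm1 c b (n + 1), tri_perm2 a c b, h1, h2, hs] at h
        revert h; cases chi ({a, c, n + 1} : Finset ℕ) <;> decide
  · -- c < a, chi {a,b,c} = false
    rcases Nat.lt_or_ge b c with hbc2 | hbc2
    · -- b < c < a
      have h := quad hchi (by omega) hbc2 hlt (by omega) (le_refl (n + 1))
      rw [tri_perm1 b a (n + 1)] at h
      rw [tri_perm2 b c a, tri_perm1 b a c, h1, h2, hs] at h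
      revert h; cases chi ({c, a, n + 1} : Finset ℕ) <;> decide
    · rcases Nat.lt_or_ge b a with hba | hba
      · -- c < b < a
        have hcb : c < b := by omega
        have h := quad hchi (by omega) hcb hba (by omega) (le_refl (n + 1))
        rw [tri_perm1 b a (n + 1), tri_perm1 c b (n + 1)] at h
        rw [tri_perm1 c b a, tri_perm2 b c a, tri_perm1 b a c, h1, h2, hs] at h
        revert h; cases chi ({c, a, n + 1} : Finset ℕ) <;> decide
      · -- c < a < b
        have hab2 : a < b := by omega
        have h := quad hchi (by omega) hlt hab2 (by omega) (le_refl (n + 1))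
        rw [tri_perm1 c b (n + 1)] at h
        rw [tri_perm1 c a b, tri_perm2 a c b, h1, h2, hs] at h
        revert h; cases chi ({c, a, n + 1} : Finset ℕ) <;> decide

/-- Rank within the star of `n+1`. -/
def gRank (chi : Finset ℕ → Bool) (n : ℕ) (i : ℕ) : ℕ :=
  ((Finset.Icc 1 n).filter (fun j => Prec chi (n + 1) j i)).card

lemma gRank_le (chi : Finset ℕ → Bool) (n i : ℕ) : gRank chi n i ≤ n := by
  have h1 := Finset.card_filter_le (Finset.Icc 1 n) (fun j => Prec chi (n + 1) j i)
  have h2 : (Finset.Icc 1 n).card = n := by rw [Nat.card_Icc]; omega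
  unfold gRank; omega

lemma gRank_lt {n : ℕ} {chi : Finset ℕ → Bool}
    (hchi : IsSignotopeOn 3 (Finset.Icc 1 (n + 1)) chi)
    {i j : ℕ} (hi : i ∈ Finset.Icc 1 n) (hj : j ∈ Finset.Icc 1 n)
    (hp : Prec chi (n + 1) i j) : gRank chi n i < gRank chi n j := by
  apply Finset.card_lt_card
  rw [Finset.ssubset_iff_of_subset]
  · exact ⟨i, Finset.mem_filter.mpr ⟨hi, hp⟩,
      fun hcon => prec_asymm (Finset.mem_filter.mp hcon).2 (Finset.mem_filter.mp hcon).2⟩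
  · intro x hx
    rw [Finset.mem_filter] at hx ⊢
    exact ⟨hx.1, prec_trans hchi hx.1 hi hj hx.2 hp⟩

lemma exists_rank : ∀ (n : ℕ) (chi : Finset ℕ → Bool),
    IsSignotopeOn 3 (Finset.Icc 1 n) chi →
    ∃ f : Finset ℕ → ℕ, ∀ R R', pairDir n chi R R' → f R < f R' := by
  intro n
  induction n with
  | zero =>
    intro chi _
    refine ⟨fun _ => 0, fun R R' h => absurd h.2.2.1 ?_⟩
    have hR := h.1
    rw [Finset.Icc_eq_empty (by omega)] at hR
    rw [Finset.subset_empty.mp hR]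
    simp
  | succ n ih =>
    intro chi hchi
    have hchi' : IsSignotopeOn 3 (Finset.Icc 1 n) chi := fun A hA hcA =>
      hchi A (hA.trans (Finset.Icc_subset_Icc_right (by omega))) hcA
    obtain ⟨f0, hf0⟩ := ih chi hchi'
    set M := ((Finset.Icc 1 (n + 1)).powerset).sup f0 with hM
    have hMle : ∀ R : Finset ℕ, R ⊆ Finset.Icc 1 (n + 1) → f0 R ≤ M :=
      fun R hR => Finset.le_sup (Finset.mem_powerset.mpr hR)
    refine ⟨fun P => if n + 1 ∈ P then M + 2 + gRank chi n (P.sum id - (n + 1))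
      else if chi (insert (n + 1) P) = true then f0 P else M + n + 4 + f0 P, ?_⟩
    intro R R' hE
    dsimp only
    obtain ⟨a, b, c, hab, hbc, hac, hRe, hR'e, haI, hbI, hcI, hdir⟩ := edge_form hE
    simp only [Finset.mem_Icc] at haI hbI hcI
    by_cases hbT : b = n + 1
    · -- both pairs contain n+1
      subst hbT
      have haT : a ≠ n + 1 := hab
      have hcT : c ≠ n + 1 := Ne.symm hbc
      have hTR : n + 1 ∈ R := by rw [hRe]; simp
      have hTR' : n + 1 ∈ R' := by rw [hR'e]; simp
      rw [if_pos hTR, if_pos hTR']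
      have hsum1 : R.sum id - (n + 1) = a := by
        rw [hRe, Finset.sum_pair haT]; simp
      have hsum2 : R'.sum id - (n + 1) = c := by
        rw [hR'e, Finset.sum_pair (Ne.symm hcT)]; simp
      rw [hsum1, hsum2]
      have hprec : Prec chi (n + 1) a c := by
        rcases hdir with ⟨h, hs⟩ | ⟨h, hs⟩
        · refine Or.inl ⟨h, ?_⟩
          rw [← tri_perm2 a (n + 1) c]; exact hs
        · refine Or.inr ⟨h, ?_⟩
          rw [← tri_perm1 a c (n + 1), ← tri_perm2 a (n + 1) c]; exact hs
      have := gRank_lt hchi (by rw [Finset.mem_Icc]; omega) (by rw [Finset.mem_Icc]; omega) hprec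
      omega
    · by_cases haT : a = n + 1
      · -- R contains n+1, R' does not
        subst haT
        have hcT : c ≠ n + 1 := Ne.symm hac
        have hTR : n + 1 ∈ R := by rw [hRe]; simp
        have hTR' : n + 1 ∉ R' := by
          rw [hR'e]; simp only [Finset.mem_insert, Finset.mem_singleton]
          rintro (h | h)
          · exact hbT h.symm
          · exact hcT h.symm
        obtain ⟨h, hs⟩ : c < n + 1 ∧ chi {n + 1, b, c} = false := by
          rcases hdir with ⟨h, _⟩ | ⟨h, hs⟩
          · omega
          · exact ⟨h, hs⟩
        rw [if_pos hTR, if_neg hTR']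
        have hins : insert (n + 1) R' = ({n + 1, b, c} : Finset ℕ) := by rw [hR'e]
        rw [if_neg (by rw [hins, hs]; simp)]
        have hg := gRank_le chi n (R.sum id - (n + 1))
        omega
      · by_cases hcT : c = n + 1
        · -- R' contains n+1, R does not
          subst hcT
          have hTR : n + 1 ∉ R := by
            rw [hRe]; simp only [Finset.mem_insert, Finset.mem_singleton]
            rintro (h | h)
            · exact haT h.symm
            · exact hbT h.symm
          have hTR' : n + 1 ∈ R' := by rw [hR'e]; simp
          obtain ⟨h, hs⟩ : a < n + 1 ∧ chi {a, b, n + 1} = true := by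
            rcases hdir with ⟨h, hs⟩ | ⟨h, _⟩
            · exact ⟨h, hs⟩
            · omega
          rw [if_neg hTR, if_pos hTR']
          have hins : insert (n + 1) R = ({a, b, n + 1} : Finset ℕ) := by
            rw [hRe]
            exact (tri_perm1 (n + 1) a b).trans (tri_perm2 a (n + 1) b)
          rw [if_pos (by rw [hins, hs])]
          have hsubRi : R ⊆ Finset.Icc 1 (n + 1) := by
            rw [hRe]; intro x hx; simp at hx
            rcases hx with rfl | rfl <;> (rw [Finset.mem_Icc]; omega)
          have hf0R : f0 R ≤ M := hMle R hsubRi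
          omega
        · -- neither contains n+1
          have hTR : n + 1 ∉ R := by
            rw [hRe]; simp only [Finset.mem_insert, Finset.mem_singleton]
            rintro (h | h)
            · exact haT h.symm
            · exact hbT h.symm
          have hTR' : n + 1 ∉ R' := by
            rw [hR'e]; simp only [Finset.mem_insert, Finset.mem_singleton]
            rintro (h | h)
            · exact hbT h.symm
            · exact hcT h.symm
          have hsubR : R ⊆ Finset.Icc 1 n := by
            rw [hRe]; intro x hx; simp at hx
            rcases hx with rfl | rfl <;> (rw [Finset.mem_Icc]; omega)
          have hsubR' : R' ⊆ Finset.Icc 1 n := by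
            rw [hR'e]; intro x hx; simp at hx
            rcases hx with rfl | rfl <;> (rw [Finset.mem_Icc]; omega)
          have hold : pairDir n chi R R' :=
            ⟨hsubR, hsubR', hE.2.2.1, hE.2.2.2.1, hE.2.2.2.2.1, hE.2.2.2.2.2⟩
          have hlt := hf0 R R' hold
          have hinsR : insert (n + 1) R = ({a, b, n + 1} : Finset ℕ) := by
            rw [hRe]
            exact (tri_perm1 (n + 1) a b).trans (tri_perm2 a (n + 1) b)
          have hinsR' : insert (n + 1) R' = ({b, c, n + 1} : Finset ℕ) := by
            rw [hR'e]
            exact (tri_perm1 (n + 1) b c).trans (tri_perm2 b (n + 1) c)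
          rw [if_neg hTR, if_neg hTR']
          have hf0R : f0 R ≤ M := hMle R (hsubR.trans (Finset.Icc_subset_Icc_right (by omega)))
          by_cases hs1 : chi (insert (n + 1) R) = true <;>
            by_cases hs2 : chi (insert (n + 1) R') = true
          · rw [if_pos hs1, if_pos hs2]; exact hlt
          · rw [if_pos hs1, if_neg hs2]; omega
          · exfalso
            rw [Bool.not_eq_true] at hs1
            have h1 : chi {a, b, n + 1} = false := by rw [← hinsR]; exact hs1
            have h2 : chi {b, c, n + 1} = true := by rw [← hinsR']; exact hs2
            exact key hchi (by rw [Finset.mem_Icc]; omega) (by rw [Finset.mem_Icc]; omega)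
              (by rw [Finset.mem_Icc]; omega) hab hbc hac hdir h1 h2
          · rw [if_neg hs1, if_neg hs2]; omega

end PairAcyclicAux

/-- for a 3-signotope `chi` on `[n]`, the graph `G_χ` is acyclic. -/
theorem pairDir_acyclic (n : Nat) (chi : Finset Nat -> Bool)
    (hchi : IsSignotopeOn 3 (Finset.Icc 1 n) chi) :
    ∀ R : Finset Nat, ¬ Relation.TransGen (pairDir n chi) R R := by
  obtain ⟨f, hf⟩ := PairAcyclicAux.exists_rank n chi hchi
  intro R hR
  have hmono : ∀ S S', Relation.TransGen (pairDir n chi) S S' → f S < f S' := by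
    intro S S' h
    induction h with
    | single h => exact hf _ _ h
    | tail _ h ih => exact lt_trans ih (hf _ _ h)
  exact lt_irrefl _ (hmono R R hR)
end

section
/- Let O be an acyclic orientation of a finite grid [n₁] × ... × [n_r] such that every subgrid of dimension at most 2 has at most one sink. Then every subgrid has at most one sink (so O is a unique sink orientation if additionally every subgrid has at least one sink, which follows from acyclicity). -/
/-- The dimension of a subgrid: the number of coordinates with more than one value. -/
def subgridDim {r : Nat} {n : Fin r -> Nat} (S : ∀ i, Finset (Fin (n i))) : Nat :=
  (Finset.univ.filter (fun i => 1 < (S i).card)).card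

/-- A sink of a subgrid is a sink of any smaller subgrid containing it. -/
lemma sink_restrict {r : Nat} {n : Fin r -> Nat}
    {O : (∀ i, Fin (n i)) -> (∀ i, Fin (n i)) -> Prop}
    {S T : ∀ i, Finset (Fin (n i))} {x : ∀ i, Fin (n i)}
    (hTS : ∀ i, T i ⊆ S i) (hxT : ∀ i, x i ∈ T i) (hx : IsSinkIn O S x) :
    IsSinkIn O T x :=
  ⟨hxT, fun y hy hadj => hx.2 y (fun i => hTS i (hy i)) hadj⟩

/-- A non-sink of a subgrid has an outgoing edge within the subgrid. -/
lemma exists_out {r : Nat} {n : Fin r -> Nat}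
    {O : (∀ i, Fin (n i)) -> (∀ i, Fin (n i)) -> Prop} (hO : IsGridOrientation O)
    {S : ∀ i, Finset (Fin (n i))} {u : ∀ i, Fin (n i)}
    (huS : ∀ i, u i ∈ S i) (hns : ¬ IsSinkIn O S u) :
    ∃ w, (∀ i, w i ∈ S i) ∧ GridAdj u w ∧ O u w := by
  have hB : ¬ ∀ w, (∀ i, w i ∈ S i) → GridAdj u w → O w u := fun hB => hns ⟨huS, hB⟩
  push_neg at hB
  obtain ⟨w, hwS, hadj, hn⟩ := hB
  exact ⟨w, hwS, hadj, (hO.2 u w hadj).mpr hn⟩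

/-- If from some vertex one can always move along an edge staying inside a set,
then (by finiteness) there is a directed cycle. -/
lemma cycle_of_forall_out {V : Type*} [Finite V] {O : V → V → Prop} {M : V → Prop}
    (hstep : ∀ u, M u → ∃ w, M w ∧ O u w) (u₀ : V) (h0 : M u₀) :
    ∃ a, Relation.TransGen O a a := by
  have hf : ∀ u, ∃ w, M u → M w ∧ O u w := by
    intro u
    by_cases h : M u
    · obtain ⟨w, hw⟩ := hstep u h; exact ⟨w, fun _ => hw⟩
    · exact ⟨u, fun h' => absurd h' h⟩
  choose f hf using hf
  have hiterM : ∀ t, M (f^[t] u₀) := by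
    intro t; induction t with
    | zero => exact h0
    | succ t ih => rw [Function.iterate_succ_apply']; exact (hf _ ih).1
  have htrans : ∀ s t, s < t → Relation.TransGen O (f^[s] u₀) (f^[t] u₀) := by
    intro s t hst
    induction t with
    | zero => omega
    | succ t ih =>
      rcases Nat.lt_succ_iff_lt_or_eq.mp hst with h | h
      · refine (ih h).tail ?_
        rw [Function.iterate_succ_apply']
        exact (hf _ (hiterM t)).2
      · subst h
        rw [Function.iterate_succ_apply']
        exact Relation.TransGen.single (hf _ (hiterM s)).2
  obtain ⟨s, t, hst, he⟩ := Finite.exists_ne_map_eq_of_infinite (fun t : ℕ => f^[t] u₀)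
  have he' : f^[s] u₀ = f^[t] u₀ := he
  rcases hst.lt_or_gt with h | h
  · refine ⟨f^[s] u₀, ?_⟩
    have := htrans s t h
    rwa [← he'] at this
  · refine ⟨f^[t] u₀, ?_⟩
    have := htrans t s h
    rwa [he'] at this

/-- if an acyclic grid orientation has at most one sink in every subgrid of
dimension at most `2`, then every subgrid has at most one sink. -/
theorem low_dim_unique_sinks_suffice (r : Nat) (n : Fin r -> Nat)
    (O : (∀ i, Fin (n i)) -> (∀ i, Fin (n i)) -> Prop)
    (hO : IsGridOrientation O)
    (hacyc : ∀ x, ¬ Relation.TransGen O x x)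
    (h2 : ∀ S : ∀ i, Finset (Fin (n i)), (∀ i, (S i).Nonempty) -> subgridDim S <= 2 ->
      ∀ x y, IsSinkIn O S x -> IsSinkIn O S y -> x = y) :
    ∀ S : ∀ i, Finset (Fin (n i)), (∀ i, (S i).Nonempty) ->
      ∀ x y, IsSinkIn O S x -> IsSinkIn O S y -> x = y := by
  suffices H : ∀ d (S : ∀ i, Finset (Fin (n i))), (∀ i, (S i).Nonempty) →
      ∀ x y, IsSinkIn O S x → IsSinkIn O S y →
      (Finset.univ.filter fun i => x i ≠ y i).card ≤ d → x = y by
    intro S hS x y hx hy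
    exact H _ S hS x y hx hy le_rfl
  intro d
  induction d using Nat.strong_induction_on with
  | _ d IH =>
  intro S hS x y hx hy hd
  -- the span of x and y
  set C : ∀ i, Finset (Fin (n i)) := fun i => ({x i, y i} : Finset (Fin (n i))) with hC
  have hCmem : ∀ j a, a ∈ C j ↔ (a = x j ∨ a = y j) := by
    intro j a; rw [hC]; simp
  have hCS : ∀ i, C i ⊆ S i := by
    intro i a ha
    rcases (hCmem i a).mp ha with h | h
    · exact h ▸ hx.1 i
    · exact h ▸ hy.1 i
  have hCne : ∀ i, (C i).Nonempty := fun i => ⟨x i, (hCmem i _).mpr (Or.inl rfl)⟩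
  have hxC : ∀ i, x i ∈ C i := fun i => (hCmem i _).mpr (Or.inl rfl)
  have hyC : ∀ i, y i ∈ C i := fun i => (hCmem i _).mpr (Or.inr rfl)
  have hxCs : IsSinkIn O C x := sink_restrict hCS hxC hx
  have hyCs : IsSinkIn O C y := sink_restrict hCS hyC hy
  set D : Finset (Fin r) := Finset.univ.filter (fun i => x i ≠ y i) with hD
  have hDmem : ∀ j, j ∈ D ↔ x j ≠ y j := by
    intro j; rw [hD]; simp
  by_cases hbase : D.card ≤ 2
  · -- base case: dimension ≤ 2
    have hdim : subgridDim C ≤ 2 := by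
      unfold subgridDim
      have heq : (Finset.univ.filter fun i => 1 < (C i).card) = D := by
        rw [hD]
        apply Finset.filter_congr
        intro i _
        simp only [hC]
        by_cases hxy : x i = y i
        · simp [hxy]
        · simp [Finset.card_pair hxy, hxy]
      rw [heq]; exact hbase
    exact h2 C hCne hdim x y hxCs hyCs
  · exfalso
    have hd3 : 3 ≤ D.card := by omega
    have hdlt : D.card - 1 < d := by omega
    have IH' := IH (D.card - 1) hdlt
    -- any sink of the span is x or y
    have claimA : ∀ u, IsSinkIn O C u → u = x ∨ u = y := by
      intro u hu
      by_cases hux : u = x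
      · exact Or.inl hux
      right
      have hsub : (Finset.univ.filter fun j => u j ≠ x j) ⊆ D := by
        intro j hj
        simp only [Finset.mem_filter, Finset.mem_univ, true_and] at hj
        rw [hDmem]
        rcases (hCmem j _).mp (hu.1 j) with h | h
        · exact absurd h hj
        · intro hxy; exact hj (h.trans hxy.symm)
      have hge : ¬ ((Finset.univ.filter fun j => u j ≠ x j).card ≤ D.card - 1) := by
        intro hle
        exact hux (IH' C hCne u x hu hxCs hle)
      have heq : (Finset.univ.filter fun j => u j ≠ x j) = D :=
        Finset.eq_of_subset_of_card_le hsub (by omega)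
      funext i
      by_cases hiD : i ∈ D
      · have hne : u i ≠ x i := by
          rw [← heq] at hiD
          simp only [Finset.mem_filter, Finset.mem_univ, true_and] at hiD
          exact hiD
        rcases (hCmem i _).mp (hu.1 i) with h | h
        · exact absurd h hne
        · exact h
      · have h1 : u i = x i := by
          rw [← heq] at hiD
          simp only [Finset.mem_filter, Finset.mem_univ, true_and, not_not] at hiD
          exact hiD
        have h2' : x i = y i := by
          by_contra h
          exact hiD ((hDmem i).mpr h)
        exact h1.trans h2'
    -- the set of "middle" vertices
    set Mid : (∀ i, Fin (n i)) → Prop :=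
      fun u => (∀ i, u i ∈ C i) ∧ u ≠ x ∧ u ≠ y with hMid
    -- every middle vertex has an out-edge to a middle vertex
    have claimB : ∀ u, Mid u → ∃ w, Mid w ∧ O u w := by
      rintro u ⟨huC, hux, huy⟩
      have hns : ¬ IsSinkIn O C u := fun hs => ((claimA u hs).elim hux huy)
      obtain ⟨w, hwC, hadj, houw⟩ := exists_out hO huC hns
      by_cases hwx : w = x
      · -- the out-edge goes to x; find another one inside the facet of y
        rw [hwx] at hadj
        obtain ⟨i, hne, hrest⟩ : ∃ i, u i ≠ x i ∧ ∀ j, j ≠ i → u j = x j := hadj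
        have hui : u i = y i := by
          rcases (hCmem i _).mp (huC i) with h | h
          · exact absurd h hne
          · exact h
        have hxyi : x i ≠ y i := fun h => hne (hui.trans h.symm)
        have hiD : i ∈ D := (hDmem i).mpr hxyi
        set F : ∀ j, Finset (Fin (n j)) := Function.update C i {y i} with hF
        have hFi : F i = {y i} := by rw [hF]; exact Function.update_self _ _ _
        have hFj : ∀ j, j ≠ i → F j = C j := by
          intro j hj; rw [hF]; exact Function.update_of_ne hj _ _
        have hFC : ∀ j, F j ⊆ C j := by
          intro j
          by_cases hj : j = i
          · subst hj
            rw [hFi]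
            exact Finset.singleton_subset_iff.mpr (hyC j)
          · rw [hFj j hj]
        have hFne : ∀ j, (F j).Nonempty := by
          intro j
          by_cases hj : j = i
          · subst hj; rw [hFi]; exact ⟨y j, Finset.mem_singleton_self _⟩
          · rw [hFj j hj]; exact hCne j
        have huF : ∀ j, u j ∈ F j := by
          intro j
          by_cases hj : j = i
          · subst hj; rw [hFi, Finset.mem_singleton]; exact hui
          · rw [hFj j hj]; exact huC j
        have hyF : ∀ j, y j ∈ F j := by
          intro j
          by_cases hj : j = i
          · subst hj; rw [hFi]; exact Finset.mem_singleton_self _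
          · rw [hFj j hj]; exact hyC j
        have hysF : IsSinkIn O F y := sink_restrict hFC hyF hyCs
        have hnsF : ¬ IsSinkIn O F u := by
          intro hs
          apply huy
          apply IH' F hFne u y hs hysF
          have hsub2 : (Finset.univ.filter fun j => u j ≠ y j) ⊆ D.erase i := by
            intro j hj
            simp only [Finset.mem_filter, Finset.mem_univ, true_and] at hj
            have hji : j ≠ i := fun h => hj (h ▸ hui)
            refine Finset.mem_erase.mpr ⟨hji, (hDmem j).mpr ?_⟩
            rw [← hrest j hji]; exact hj
          calc (Finset.univ.filter fun j => u j ≠ y j).card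
              ≤ (D.erase i).card := Finset.card_le_card hsub2
            _ = D.card - 1 := Finset.card_erase_of_mem hiD
        obtain ⟨w', hw'F, hadj', houw'⟩ := exists_out hO huF hnsF
        have hw'i : w' i = y i := by
          have := hw'F i; rw [hFi, Finset.mem_singleton] at this; exact this
        refine ⟨w', ⟨fun j => hFC j (hw'F j), ?_, ?_⟩, houw'⟩
        · intro h
          exact hxyi (h ▸ hw'i)
        · intro h
          have h2card : 1 < (D.erase i).card := by
            rw [Finset.card_erase_of_mem hiD]; omega
          obtain ⟨j₁, hj₁, j₂, hj₂, hj12⟩ := Finset.one_lt_card.mp h2card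
          obtain ⟨k, _, hk⟩ : ∃ k, u k ≠ y k ∧ ∀ j, j ≠ k → u j = y j := h ▸ hadj'
          have hpick : ∃ j ∈ D.erase i, j ≠ k := by
            by_cases h1 : j₁ = k
            · exact ⟨j₂, hj₂, fun hh => hj12 (h1.trans hh.symm ▸ rfl)⟩
            · exact ⟨j₁, hj₁, h1⟩
          obtain ⟨j, hjmem, hjk⟩ := hpick
          obtain ⟨hji, hjD⟩ := Finset.mem_erase.mp hjmem
          have hxyj : x j ≠ y j := (hDmem j).mp hjD
          have huj : u j = y j := hk j hjk
          rw [hrest j hji] at huj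
          exact hxyj huj
      by_cases hwy : w = y
      · -- the out-edge goes to y; find another one inside the facet of x
        rw [hwy] at hadj
        obtain ⟨i, hne, hrest⟩ : ∃ i, u i ≠ y i ∧ ∀ j, j ≠ i → u j = y j := hadj
        have hui : u i = x i := by
          rcases (hCmem i _).mp (huC i) with h | h
          · exact h
          · exact absurd h hne
        have hxyi : x i ≠ y i := hui ▸ hne
        have hiD : i ∈ D := (hDmem i).mpr hxyi
        set F : ∀ j, Finset (Fin (n j)) := Function.update C i {x i} with hF
        have hFi : F i = {x i} := by rw [hF]; exact Function.update_self _ _ _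
        have hFj : ∀ j, j ≠ i → F j = C j := by
          intro j hj; rw [hF]; exact Function.update_of_ne hj _ _
        have hFC : ∀ j, F j ⊆ C j := by
          intro j
          by_cases hj : j = i
          · subst hj
            rw [hFi]
            exact Finset.singleton_subset_iff.mpr (hxC j)
          · rw [hFj j hj]
        have hFne : ∀ j, (F j).Nonempty := by
          intro j
          by_cases hj : j = i
          · subst hj; rw [hFi]; exact ⟨x j, Finset.mem_singleton_self _⟩
          · rw [hFj j hj]; exact hCne j
        have huF : ∀ j, u j ∈ F j := by
          intro j
          by_cases hj : j = i
          · subst hj; rw [hFi, Finset.mem_singleton]; exact hui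
          · rw [hFj j hj]; exact huC j
        have hxF : ∀ j, x j ∈ F j := by
          intro j
          by_cases hj : j = i
          · subst hj; rw [hFi]; exact Finset.mem_singleton_self _
          · rw [hFj j hj]; exact hxC j
        have hxsF : IsSinkIn O F x := sink_restrict hFC hxF hxCs
        have hnsF : ¬ IsSinkIn O F u := by
          intro hs
          apply hux
          apply IH' F hFne u x hs hxsF
          have hsub2 : (Finset.univ.filter fun j => u j ≠ x j) ⊆ D.erase i := by
            intro j hj
            simp only [Finset.mem_filter, Finset.mem_univ, true_and] at hj
            have hji : j ≠ i := fun h => hj (h ▸ hui)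
            refine Finset.mem_erase.mpr ⟨hji, (hDmem j).mpr ?_⟩
            rw [hrest j hji] at hj
            exact fun h => hj h.symm
          calc (Finset.univ.filter fun j => u j ≠ x j).card
              ≤ (D.erase i).card := Finset.card_le_card hsub2
            _ = D.card - 1 := Finset.card_erase_of_mem hiD
        obtain ⟨w', hw'F, hadj', houw'⟩ := exists_out hO huF hnsF
        have hw'i : w' i = x i := by
          have := hw'F i; rw [hFi, Finset.mem_singleton] at this; exact this
        refine ⟨w', ⟨fun j => hFC j (hw'F j), ?_, ?_⟩, houw'⟩
        · intro h
          have h2card : 1 < (D.erase i).card := by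
            rw [Finset.card_erase_of_mem hiD]; omega
          obtain ⟨j₁, hj₁, j₂, hj₂, hj12⟩ := Finset.one_lt_card.mp h2card
          obtain ⟨k, _, hk⟩ : ∃ k, u k ≠ x k ∧ ∀ j, j ≠ k → u j = x j := h ▸ hadj'
          have hpick : ∃ j ∈ D.erase i, j ≠ k := by
            by_cases h1 : j₁ = k
            · exact ⟨j₂, hj₂, fun hh => hj12 (h1.trans hh.symm ▸ rfl)⟩
            · exact ⟨j₁, hj₁, h1⟩
          obtain ⟨j, hjmem, hjk⟩ := hpick
          obtain ⟨hji, hjD⟩ := Finset.mem_erase.mp hjmem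
          have hxyj : x j ≠ y j := (hDmem j).mp hjD
          have huj : u j = x j := hk j hjk
          rw [hrest j hji] at huj
          exact hxyj huj.symm
        · intro h
          exact hxyi (h ▸ hw'i).symm
      exact ⟨w, ⟨hwC, hwx, hwy⟩, houw⟩
    -- a middle vertex exists
    have hDne : D.Nonempty := Finset.card_pos.mp (by omega)
    obtain ⟨i₀, hi₀⟩ := hDne
    have hxyi₀ : x i₀ ≠ y i₀ := (hDmem i₀).mp hi₀
    set u₀ : ∀ i, Fin (n i) := Function.update x i₀ (y i₀) with hu₀
    have hu₀i₀ : u₀ i₀ = y i₀ := by rw [hu₀]; exact Function.update_self _ _ _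
    have hu₀j : ∀ j, j ≠ i₀ → u₀ j = x j := by
      intro j hj; rw [hu₀]; exact Function.update_of_ne hj _ _
    have hu₀C : ∀ j, u₀ j ∈ C j := by
      intro j
      by_cases hj : j = i₀
      · subst hj; rw [hu₀i₀]; exact hyC j
      · rw [hu₀j j hj]; exact hxC j
    have hu₀x : u₀ ≠ x := by
      intro h
      rw [h] at hu₀i₀
      exact hxyi₀ hu₀i₀
    have hu₀y : u₀ ≠ y := by
      have h2card : 1 < D.card := by omega
      have h2card' : 0 < (D.erase i₀).card := by
        rw [Finset.card_erase_of_mem hi₀]; omega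
      obtain ⟨j, hjmem⟩ := Finset.card_pos.mp h2card'
      obtain ⟨hji, hjD⟩ := Finset.mem_erase.mp hjmem
      intro h
      have : u₀ j = x j := hu₀j j hji
      rw [h] at this
      exact (hDmem j).mp hjD this.symm
    obtain ⟨a, ha⟩ := cycle_of_forall_out claimB u₀ ⟨hu₀C, hu₀x, hu₀y⟩
    exact hacyc a ha
end

section
/- For a 3-signotope χ on [n] with block partition [n] = C₁ ∪ C₂ (|C₁| = b, |C₂| = r), and for any fixed c₁ ∈ C₁, the map sending c₂ ∈ C₂ to the second coordinate of rf_χ(c₁, c₂) is a bijection from C₂ onto {0, ..., r-1}. -/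
/-!
Fix `c₁` and orient `C₂` as a tournament: `a` beats `b` if `a < b` and `χ(c₁,a,b) = +`, or
`b < a` and `χ(c₁,b,a) = -`; the refined index of `c₂` is then its out-degree. For
`c₁ < a < b < c` the signs `χ(c₁,b,c), χ(c₁,a,c), χ(c₁,a,b)` are consecutive in the deletion
sequence of `{c₁,a,b,c}`, so they never read `+-+` or `-+-`, and this is exactly what rules out
cyclic triangles. A tournament without cyclic triangles is a strict total order, and the
out-degrees of a strict total order on `r` elements are `0, …, r - 1`.
-/

open Finset

theorem Finset.bijOn_card_filter_of_strictTotalOn {α : Type*} {r : α → α → Prop}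
    [DecidableRel r] (S : Finset α) (irrefl : ∀ a ∈ S, ¬ r a a)
    (trans : ∀ a ∈ S, ∀ b ∈ S, ∀ c ∈ S, r a b → r b c → r a c)
    (total : ∀ a ∈ S, ∀ b ∈ S, a ≠ b → r a b ∨ r b a) :
    Set.BijOn (fun a => #{b ∈ S | r a b}) S {k | k < #S} := by
  have upper_ssubset : ∀ a ∈ S, ∀ b ∈ S, r a b → {c ∈ S | r b c} ⊂ {c ∈ S | r a c} := by
    intro a ha b hb hab
    refine ssubset_iff_of_subset (fun c hc => ?_) |>.mpr ⟨b, ?_, ?_⟩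
    · rw [mem_filter] at hc ⊢
      exact ⟨hc.1, trans a ha b hb c hc.1 hab hc.2⟩
    · exact mem_filter.2 ⟨hb, hab⟩
    · exact fun hb' => irrefl b hb (mem_filter.1 hb').2
  have mapsTo : Set.MapsTo (fun a => #{b ∈ S | r a b}) S {k | k < #S} := fun a ha =>
    card_lt_card <| filter_ssubset.mpr ⟨a, ha, irrefl a ha⟩
  have injOn : Set.InjOn (fun a => #{b ∈ S | r a b}) S := by
    intro a ha b hb hab
    by_contra hne
    rcases total a ha b hb hne with h | h
    · exact (card_lt_card (upper_ssubset a ha b hb h)).ne' hab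
    · exact (card_lt_card (upper_ssubset b hb a ha h)).ne hab
  refine ⟨mapsTo, injOn, fun k hk => ?_⟩
  exact surjOn_of_injOn_of_card_le (t := range #S) _ (fun a ha => mem_range.2 (mapsTo ha))
    injOn (by simp) (mem_range.2 hk)

theorem sort_four {p a b c : ℕ} (hpa : p < a) (hab : a < b) (hbc : b < c) :
    ({p, a, b, c} : Finset ℕ).sort (· ≤ ·) = [p, a, b, c] := by
  rw [sort_insert _ ?_ ?_, sort_insert _ ?_ ?_, sort_insert _ ?_ ?_, sort_singleton] <;>
    simp <;> omega

theorem card_four {p a b c : ℕ} (hpa : p < a) (hab : a < b) (hbc : b < c) :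
    #({p, a, b, c} : Finset ℕ) = 4 := by
  rw [← length_sort (· ≤ ·), sort_four hpa hab hbc]; rfl

theorem delSeq_four (chi : Finset ℕ → Bool) {p a b c : ℕ} (hpa : p < a) (hab : a < b)
    (hbc : b < c) :
    delSeq chi {p, a, b, c} = [chi {a, b, c}, chi {p, b, c}, chi {p, a, c}, chi {p, a, b}] := by
  simp [delSeq, card_four hpa hab hbc, sort_four hpa hab hbc, List.range_succ, List.eraseIdx]

theorem eq_of_signChanges_le_one_s16 {w x y z : Bool} (h : signChanges [w, x, y, z] ≤ 1)
    (hxz : x = z) : y = z := by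
  revert w x y z
  decide

theorem IsSignotopeOn.chi_middle_eq {S : Finset ℕ} {chi : Finset ℕ → Bool}
    (hchi : IsSignotopeOn 3 S chi) {p a b c : ℕ} (hp : p ∈ S) (ha : a ∈ S) (hb : b ∈ S)
    (hc : c ∈ S) (hpa : p < a) (hab : a < b) (hbc : b < c)
    (h : chi {p, b, c} = chi {p, a, b}) : chi {p, a, c} = chi {p, a, b} := by
  have hsign := hchi {p, a, b, c} (by simp [insert_subset_iff, *]) (card_four hpa hab hbc)
  rw [delSeq_four chi hpa hab hbc] at hsign
  exact eq_of_signChanges_le_one_s16 hsign h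

def beats (chi : Finset ℕ → Bool) (p a b : ℕ) : Prop :=
  a < b ∧ chi {p, a, b} = true ∨ b < a ∧ chi {p, b, a} = false

section beats

variable {chi : Finset ℕ → Bool} {p a b c : ℕ}

theorem not_beats_self : ¬ beats chi p a a := by
  simp [beats]

theorem beats_or_beats_of_ne (hab : a ≠ b) : beats chi p a b ∨ beats chi p b a := by
  unfold beats
  rcases hab.lt_or_gt with h | h
  · cases chi {p, a, b} <;> simp [h]
  · cases chi {p, b, a} <;> simp [h]

theorem IsSignotopeOn.not_beats_cycle_of_lt {S : Finset ℕ} (hchi : IsSignotopeOn 3 S chi)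
    (hp : p ∈ S) (ha : a ∈ S) (hb : b ∈ S) (hc : c ∈ S) (hpa : p < a) (hab : a < b)
    (hac : a < c) : ¬ (beats chi p a b ∧ beats chi p b c ∧ beats chi p c a) := by
  rintro ⟨h₁, h₂, h₃⟩
  rcases lt_trichotomy b c with hbc | rfl | hcb
  · have := hchi.chi_middle_eq hp ha hb hc hpa hab hbc
    simp_all [beats, hbc.not_gt, hab.not_gt, hac.not_gt]
  · exact not_beats_self h₂
  · have := hchi.chi_middle_eq hp ha hc hb hpa hac hcb
    simp_all [beats, hcb.not_gt, hab.not_gt, hac.not_gt]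

theorem IsSignotopeOn.not_beats_cycle {S : Finset ℕ} (hchi : IsSignotopeOn 3 S chi)
    (hp : p ∈ S) (ha : a ∈ S) (hb : b ∈ S) (hc : c ∈ S) (hpa : p < a) (hpb : p < b)
    (hpc : p < c) : ¬ (beats chi p a b ∧ beats chi p b c ∧ beats chi p c a) := by
  rintro ⟨h₁, h₂, h₃⟩
  have : a ≠ b := by rintro rfl; exact not_beats_self h₁
  have : b ≠ c := by rintro rfl; exact not_beats_self h₂
  have : c ≠ a := by rintro rfl; exact not_beats_self h₃
  obtain ⟨hab, hac⟩ | ⟨hbc, hba⟩ | ⟨hca, hcb⟩ :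
      a < b ∧ a < c ∨ b < c ∧ b < a ∨ c < a ∧ c < b := by omega
  · exact hchi.not_beats_cycle_of_lt hp ha hb hc hpa hab hac ⟨h₁, h₂, h₃⟩
  · exact hchi.not_beats_cycle_of_lt hp hb hc ha hpb hbc hba ⟨h₂, h₃, h₁⟩
  · exact hchi.not_beats_cycle_of_lt hp hc ha hb hpc hca hcb ⟨h₃, h₁, h₂⟩

theorem not_beats_of_beats (h : beats chi p a b) : ¬ beats chi p b a := by
  unfold beats at *
  grind

theorem IsSignotopeOn.beats_trans {S : Finset ℕ} (hchi : IsSignotopeOn 3 S chi)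
    (hp : p ∈ S) (ha : a ∈ S) (hb : b ∈ S) (hc : c ∈ S) (hpa : p < a) (hpb : p < b)
    (hpc : p < c) (hab : beats chi p a b) (hbc : beats chi p b c) : beats chi p a c := by
  rcases eq_or_ne a c with rfl | hac
  · exact absurd hbc (not_beats_of_beats hab)
  · exact (beats_or_beats_of_ne hac).resolve_right fun hca =>
      hchi.not_beats_cycle hp ha hb hc hpa hpb hpc ⟨hab, hbc, hca⟩

instance : DecidableRel (beats chi p) := fun _ _ => by
  unfold beats
  infer_instance

theorem card_filter_beats (T : Finset ℕ) :
    #{c ∈ T | beats chi p a c} =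
      #{c ∈ T | a < c ∧ chi {p, a, c} = true} + #{c ∈ T | c < a ∧ chi {p, c, a} = false} := by
  rw [← card_union_of_disjoint, ← filter_or]
  · rfl
  · exact disjoint_filter.2 fun c _ h h' => by omega

end beats

/-- for a 3-signotope on `[n]` with block partition `[n] = C₁ ∪ C₂` and any fixed
`c₁ ∈ C₁`, the second refined index component `c₂ ↦ (rf_χ (c₁, c₂))₂` is a bijection from `C₂`
onto `{0, ..., |C₂| - 1}`. -/
theorem second_refined_index_bijective (n : Nat) (chi : Finset Nat -> Bool)
    (hchi : IsSignotopeOn 3 (Finset.Icc 1 n) chi)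
    (C1 C2 : Finset Nat) (hpart : C1 ∪ C2 = Finset.Icc 1 n)
    (hlt : ∀ c ∈ C1, ∀ c' ∈ C2, c < c')
    (c1 : Nat) (hc1 : c1 ∈ C1) :
    Set.BijOn
      (fun c2 => (C2.filter (fun c => c2 < c ∧ chi {c1, c2, c} = true)).card +
        (C2.filter (fun c => c < c2 ∧ chi {c1, c, c2} = false)).card)
      (C2 : Set Nat) {k : Nat | k < C2.card} := by
  have hC2 : C2 ⊆ Finset.Icc 1 n := hpart ▸ subset_union_right
  have hc1n : c1 ∈ Finset.Icc 1 n := hpart ▸ mem_union_left _ hc1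
  have hc1lt := hlt c1 hc1
  simp only [← card_filter_beats]
  exact C2.bijOn_card_filter_of_strictTotalOn (fun _ _ => not_beats_self)
    (fun a ha b hb c hc => hchi.beats_trans hc1n (hC2 ha) (hC2 hb) (hC2 hc)
      (hc1lt a ha) (hc1lt b hb) (hc1lt c hc))
    (fun _ _ _ _ => beats_or_beats_of_ne)
end

section
/- Every unique sink orientation of a grid has a unique source: if O is an orientation of [n₁] × ... × [n_r] in which every subgrid has exactly one sink, then the reversed orientation also has the property that the full grid has exactly one sink; equivalently O has exactly one source (vertex with all edges outgoing). -/
/-!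
Weight a subgrid `S = S₁ × ⋯ × S_r` by `∏ i, (-1) ^ (|Sᵢ| + 1)`. Summed over all subgrids this
factors as `∏ i, ∑_{∅ ≠ A ⊆ [nᵢ]} (-1) ^ (|A| + 1) = 1`. Since every subgrid has exactly one sink,
the same sum can be grouped by sinks. The subgrids with sink `v` are exactly the products of the
Boolean intervals `[{vᵢ}, Lᵢ(v)]`, where `Lᵢ(v)` consists of `vᵢ` and the in-neighbours of `v` in
direction `i`; an alternating sum over a Boolean interval vanishes unless the interval is a point.
So `v` contributes `1` if it is a source and `0` otherwise, and there is exactly one source.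
-/

open Finset

section NegOnePow

variable {α : Type*} [DecidableEq α]

theorem Finset.sum_Icc_neg_one_pow_card (s t : Finset α) :
    ∑ u ∈ Icc s t, (-1 : ℤ) ^ #u = if s = t then (-1) ^ #s else 0 := by
  by_cases hst : s ⊆ t
  · have hdisj {u} (hu : u ∈ (t \ s).powerset) : Disjoint s u :=
      disjoint_sdiff.mono_right (mem_powerset.mp hu)
    have hinj : Set.InjOn (s ∪ ·) (t \ s).powerset := fun u hu u' hu' h => by
      rw [← union_sdiff_cancel_left (hdisj hu), ← union_sdiff_cancel_left (hdisj hu')]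
      exact congrArg (· \ s) h
    rw [Icc_eq_image_powerset hst, sum_image hinj]
    calc ∑ u ∈ (t \ s).powerset, (-1 : ℤ) ^ #(s ∪ u)
        = (-1) ^ #s * ∑ u ∈ (t \ s).powerset, (-1 : ℤ) ^ #u := by
          rw [mul_sum]
          exact sum_congr rfl fun u hu => by rw [card_union_of_disjoint (hdisj hu), pow_add]
      _ = if s = t then (-1) ^ #s else 0 := by
          rw [sum_powerset_neg_one_pow_card]
          by_cases hts : t ⊆ s
          · simp [hst.antisymm hts]
          · simp [sdiff_eq_empty_iff_subset, hts, show s ≠ t from fun h => hts h.ge]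
  · rw [Icc_eq_empty hst, sum_empty, if_neg (by rintro rfl; exact hst subset_rfl)]

theorem Finset.sum_filter_nonempty_neg_one_pow_card_succ [Fintype α] [Nonempty α] :
    ∑ u : Finset α with u.Nonempty, (-1 : ℤ) ^ (#u + 1) = 1 := by
  have hfilter : ({u : Finset α | u.Nonempty} : Finset _) = univ.erase ∅ := by
    ext u; simp [nonempty_iff_ne_empty]
  rw [hfilter, sum_erase_eq_sub (mem_univ _), ← powerset_univ]
  simp only [pow_succ, ← sum_mul, sum_powerset_neg_one_pow_card, univ_nonempty.ne_empty]
  simp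

end NegOnePow

theorem Finset.sum_eq_sum_sum_filter_of_existsUnique {α β M : Type*} [Fintype α]
    [AddCommMonoid M] (s : Finset β) (P : α → β → Prop) [∀ a b, Decidable (P a b)]
    (h : ∀ b ∈ s, ∃! a, P a b) (w : β → M) :
    ∑ b ∈ s, w b = ∑ a, ∑ b ∈ s with P a b, w b := by
  simp_rw [sum_filter]
  rw [sum_comm]
  refine sum_congr rfl fun b hb => ?_
  rw [← sum_filter, sum_const, (Fintype.existsUnique_iff_card_one _).mp (h b hb), one_smul]

section Grid

open scoped Classical

variable {r : ℕ} {n : Fin r → ℕ} {O : (∀ i, Fin (n i)) → (∀ i, Fin (n i)) → Prop}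

theorem gridAdj_update_s18 {v : ∀ i, Fin (n i)} {i : Fin r} {b : Fin (n i)} (hb : b ≠ v i) :
    GridAdj v (Function.update v i b) :=
  ⟨i, by simpa using hb.symm, fun j hj => by simp [Function.update_of_ne hj]⟩

theorem GridAdj.exists_eq_update {v y : ∀ i, Fin (n i)} (h : GridAdj v y) :
    ∃ i, y i ≠ v i ∧ y = Function.update v i (y i) := by
  obtain ⟨i, hne, hj⟩ := h
  refine ⟨i, hne.symm, funext fun j => ?_⟩
  rcases eq_or_ne j i with rfl | hji
  · simp
  · simp [Function.update_of_ne hji, (hj j hji).symm]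

variable (O) in
/-- The points of the line through `v` in direction `i` that are `v` itself or point into `v`. -/
noncomputable def inLine (v : ∀ i, Fin (n i)) (i : Fin r) : Finset (Fin (n i)) :=
  {b | b = v i ∨ O (Function.update v i b) v}

theorem isSinkIn_iff_forall_mem_Icc {S : ∀ i, Finset (Fin (n i))} {v : ∀ i, Fin (n i)} :
    IsSinkIn O S v ↔ ∀ i, S i ∈ Icc {v i} (inLine O v i) := by
  simp only [mem_Icc, singleton_subset_iff]
  constructor
  · rintro ⟨hvS, hin⟩ i
    refine ⟨hvS i, fun b hb => ?_⟩
    by_cases hbv : b = v i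
    · simp [inLine, hbv]
    · have hmem (j) : Function.update v i b j ∈ S j := by
        rcases eq_or_ne j i with rfl | hji
        · simpa using hb
        · simpa [Function.update_of_ne hji] using hvS j
      simp [inLine, hin _ hmem (gridAdj_update_s18 hbv)]
  · intro h
    refine ⟨fun i => (h i).1, fun y hyS hadj => ?_⟩
    obtain ⟨i, hne, hy⟩ := hadj.exists_eq_update
    have := (h i).2 (hyS i)
    simp only [inLine, mem_filter, mem_univ, true_and, hne, false_or] at this
    rwa [← hy] at this

theorem forall_inLine_eq_singleton_iff (hO : IsGridOrientation O) {v : ∀ i, Fin (n i)} :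
    (∀ i, inLine O v i = {v i}) ↔ ∀ y, GridAdj v y → O v y := by
  have hline (i) : inLine O v i = {v i} ↔ ∀ b, b ≠ v i → ¬ O (Function.update v i b) v := by
    simp only [inLine, eq_singleton_iff_unique_mem, mem_filter, mem_univ, true_or, true_and]
    exact forall_congr' fun b => by tauto
  simp only [hline]
  constructor
  · intro h y hadj
    obtain ⟨i, hne, hy⟩ := hadj.exists_eq_update
    exact (hO.2 v y hadj).mpr (hy ▸ h i (y i) hne)
  · intro h i b hb
    exact (hO.2 v _ (gridAdj_update_s18 hb)).mp (h _ (gridAdj_update_s18 hb))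

variable (n) in
noncomputable def subgrids : Finset (∀ i, Finset (Fin (n i))) :=
  Fintype.piFinset fun _ => {A | A.Nonempty}

theorem mem_subgrids {S : ∀ i, Finset (Fin (n i))} : S ∈ subgrids n ↔ ∀ i, (S i).Nonempty := by
  simp [subgrids]

def subgridSign (S : ∀ i, Finset (Fin (n i))) : ℤ :=
  ∏ i, (-1) ^ (#(S i) + 1)

theorem sum_subgridSign_subgrids (hn : ∀ i, 0 < n i) : ∑ S ∈ subgrids n, subgridSign S = 1 := by
  simp only [subgrids, subgridSign]
  rw [← prod_univ_sum _ fun _ A => (-1 : ℤ) ^ (#A + 1)]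
  refine prod_eq_one fun i _ => ?_
  have : Nonempty (Fin (n i)) := ⟨⟨0, hn i⟩⟩
  exact sum_filter_nonempty_neg_one_pow_card_succ

theorem filter_isSinkIn_subgrids (v : ∀ i, Fin (n i)) :
    {S ∈ subgrids n | IsSinkIn O S v} = Fintype.piFinset fun i => Icc {v i} (inLine O v i) := by
  ext S
  simp only [mem_filter, mem_subgrids, isSinkIn_iff_forall_mem_Icc, Fintype.mem_piFinset,
    and_iff_right_iff_imp]
  exact fun h i => ⟨v i, singleton_subset_iff.mp (mem_Icc.mp (h i)).1⟩

theorem sum_subgridSign_filter_isSinkIn (v : ∀ i, Fin (n i)) :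
    ∑ S ∈ subgrids n with IsSinkIn O S v, subgridSign S =
      if ∀ i, inLine O v i = {v i} then 1 else 0 := by
  simp only [filter_isSinkIn_subgrids, subgridSign]
  rw [← prod_univ_sum _ fun _ A => (-1 : ℤ) ^ (#A + 1)]
  simp_rw [pow_succ, ← sum_mul, sum_Icc_neg_one_pow_card, card_singleton]
  simp [eq_comm, neg_ite, prod_boole]

theorem existsUnique_source_of_isUSO (hn : ∀ i, 0 < n i) (hO : IsUSO O) :
    ∃! x : ∀ i, Fin (n i), ∀ y, GridAdj x y → O x y := by
  have hsources : (#{v | ∀ i, inLine O v i = {v i}} : ℤ) = 1 := calc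
    (#{v | ∀ i, inLine O v i = {v i}} : ℤ)
        = ∑ v, ∑ S ∈ subgrids n with IsSinkIn O S v, subgridSign S := by
          simp_rw [sum_subgridSign_filter_isSinkIn, sum_boole]
      _ = ∑ S ∈ subgrids n, subgridSign S :=
          (sum_eq_sum_sum_filter_of_existsUnique _ _
            (fun S hS => hO.2 S (mem_subgrids.mp hS)) _).symm
      _ = 1 := sum_subgridSign_subgrids hn
  simp_rw [← forall_inLine_eq_singleton_iff hO.1]
  exact (Fintype.existsUnique_iff_card_one _).mpr (mod_cast hsources)

end Grid

/-- in a USO, the reversed orientation has a unique sink on the full grid;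
equivalently, the USO has exactly one source (vertex with all incident edges outgoing). -/
theorem uso_unique_source (r : Nat) (n : Fin r -> Nat) (hn : ∀ i, 0 < n i)
    (O : (∀ i, Fin (n i)) -> (∀ i, Fin (n i)) -> Prop) (hO : IsUSO O) :
    (∃! x : ∀ i, Fin (n i),
        IsSinkIn (fun a b => O b a) (fun _ => Finset.univ) x) ∧
    (∃! x : ∀ i, Fin (n i), ∀ y, GridAdj x y -> O x y) := by
  have h := existsUnique_source_of_isUSO hn hO
  exact ⟨by simpa [IsSinkIn] using h, h⟩
end
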